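/- arXiv:2410.13092 — 13 statements merged into one kernel-verified Lean document; each statement's English description precedes it below -/
import Mathlib

section
/- Let r > 0, a > 0, v0 > 0 with a/v0 < r, and let v : ℝ → ℝ be continuously differentiable with v(x) ≥ v0 for all x ∈ ℝ. Let δ : C([−r,0], ℝ) → ℝ be the map assigning to each continuous φ the unique u ∈ (0, r) with ∫_{−u}^{0} v(φ(s)) ds = a. Then δ is Fréchet differentiable at every φ ∈ C([−r,0], ℝ) (with respect to the supremum norm on C([−r,0],ℝ)), and for every χ ∈ C([−r,0], ℝ) the derivative satisfies (Dδ(φ))(χ) = −(∫_{−δ(φ)}^{0} v'(φ(s)) χ(s) ds) / v(φ(−δ(φ))). -/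
/-!
Write `F ψ u = ∫_{-u}^0 v (ψ s) ds` on `C([-r,0]) × ℝ`, so that `F ψ (δ ψ) = a`. Both partial
derivatives of `F` exist everywhere and are continuous: in `u` it is `v (ψ (-u)) ≥ v0 > 0`, and in
`ψ` it is `χ ↦ ∫_{-u}^0 v' (ψ s) χ s ds`, because `ψ ↦ v ∘ ψ` is differentiable on `C(K, ℝ)` for
compact `K` with derivative multiplication by `v' ∘ ψ` (uniform continuity of `v'` on compact
sets). The implicit function theorem then yields a strictly differentiable local solution of
`F ψ u = a`, and it agrees with `δ` because `F ψ` is strictly increasing; its derivative is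
`-(∂ᵤF)⁻¹ ∂_ψF`.
-/

open Filter Topology Function Set

theorem exists_pos_forall_abs_sub_sub_mul_le {v v' : ℝ → ℝ}
    (hv : ∀ y, HasDerivAt v (v' y) y) (hv' : Continuous v') (R : ℝ) {ε : ℝ} (hε : 0 < ε) :
    ∃ η > 0, ∀ x h, |x| ≤ R → |h| ≤ η → |v (x + h) - v x - v' x * h| ≤ ε * |h| := by
  obtain ⟨η, hη, hv'η⟩ := Metric.uniformContinuousOn_iff_le.mp
    ((isCompact_Icc (a := -(R + 1)) (b := R + 1)).uniformContinuousOn_of_continuous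
      hv'.continuousOn) ε hε
  refine ⟨min η 1, by positivity, fun x h hx hh => ?_⟩
  have hball : ∀ z ∈ Metric.closedBall x (min η 1), ‖v' z - v' x‖ ≤ ε := by
    intro z hz
    rw [Metric.mem_closedBall, Real.dist_eq] at hz
    have hxS : x ∈ Icc (-(R + 1)) (R + 1) := by
      rw [mem_Icc, ← abs_le]; linarith
    have hzS : z ∈ Icc (-(R + 1)) (R + 1) := by
      rw [mem_Icc, ← abs_le]
      linarith [abs_sub_abs_le_abs_sub z x, min_le_right η 1]
    exact hv'η z hzS x hxS ((Real.dist_eq z x).le.trans (hz.trans (min_le_left _ _)))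
  have hmvt := (convex_closedBall x (min η 1)).norm_image_sub_le_of_norm_hasDerivWithin_le
    (f := fun z => v z - v' x * z)
    (fun z _ => ((hv z).sub ((hasDerivAt_id z).const_mul (v' x))).hasDerivWithinAt)
    (by simpa using hball) (Metric.mem_closedBall_self (by positivity))
    (show x + h ∈ Metric.closedBall x (min η 1) by simpa using hh)
  simp only [Real.norm_eq_abs, add_sub_cancel_left] at hmvt
  convert hmvt using 2
  ring

theorem ContinuousMap.hasFDerivAt_postcomp {K : Type*} [TopologicalSpace K] [CompactSpace K]
    {g g' : C(ℝ, ℝ)} (hg : ∀ y, HasDerivAt g (g' y) y) (ψ : C(K, ℝ)) :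
    HasFDerivAt g.comp (ContinuousLinearMap.mul ℝ C(K, ℝ) (g'.comp ψ)) ψ := by
  rw [hasFDerivAt_iff_isLittleO_nhds_zero, Asymptotics.isLittleO_iff]
  intro ε hε
  obtain ⟨η, hη, hgη⟩ := exists_pos_forall_abs_sub_sub_mul_le hg g'.continuous ‖ψ‖ hε
  filter_upwards [Metric.closedBall_mem_nhds 0 hη] with χ hχ
  rw [mem_closedBall_zero_iff] at hχ
  refine ContinuousMap.norm_le _ (by positivity) |>.mpr fun k => ?_
  have hχk : |χ k| ≤ ‖χ‖ := by simpa using χ.norm_coe_le_norm k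
  calc |g (ψ k + χ k) - g (ψ k) - g' (ψ k) * χ k|
      ≤ ε * |χ k| := hgη _ _ (by simpa using ψ.norm_coe_le_norm k) (hχk.trans hχ)
    _ ≤ ε * ‖χ‖ := by gcongr

section IntervalIntegralIccExtend

variable {a b : ℝ} (hab : a ≤ b)

theorem abs_IccExtend_le (f : C(Icc a b, ℝ)) (s : ℝ) : |IccExtend hab f s| ≤ ‖f‖ :=
  f.norm_coe_le_norm _

theorem intervalIntegrable_IccExtend (f : C(Icc a b, ℝ)) (p q : ℝ) :
    IntervalIntegrable (IccExtend hab f) MeasureTheory.volume p q :=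
  f.continuous.Icc_extend'.intervalIntegrable p q

noncomputable def intervalIntegralIccExtend (p q : ℝ) : C(Icc a b, ℝ) →L[ℝ] ℝ :=
  LinearMap.mkContinuous
    { toFun := fun f => ∫ s in p..q, IccExtend hab f s
      map_add' := fun f g => by
        simp only [IccExtend_apply, ContinuousMap.coe_add, Pi.add_apply]
        exact intervalIntegral.integral_add (intervalIntegrable_IccExtend hab f p q)
          (intervalIntegrable_IccExtend hab g p q)
      map_smul' := fun c f => by
        simp only [IccExtend_apply, ContinuousMap.coe_smul, Pi.smul_apply, smul_eq_mul,
          intervalIntegral.integral_const_mul, RingHom.id_apply] }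
    |q - p| fun f =>
      (intervalIntegral.norm_integral_le_of_norm_le_const
        fun s _ => abs_IccExtend_le hab f s).trans_eq (mul_comm _ _)

@[simp]
theorem intervalIntegralIccExtend_apply (p q : ℝ) (f : C(Icc a b, ℝ)) :
    intervalIntegralIccExtend hab p q f = ∫ s in p..q, IccExtend hab f s := rfl

theorem lipschitzWith_intervalIntegralIccExtend_left (q : ℝ) :
    LipschitzWith 1 fun p => intervalIntegralIccExtend hab p q := by
  refine LipschitzWith.of_dist_le_mul fun p p' => ?_
  have hsub : intervalIntegralIccExtend hab p q - intervalIntegralIccExtend hab p' q =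
      intervalIntegralIccExtend hab p p' := by
    ext f
    rw [sub_apply, intervalIntegralIccExtend_apply, intervalIntegralIccExtend_apply,
      intervalIntegralIccExtend_apply, sub_eq_iff_eq_add,
      intervalIntegral.integral_add_adjacent_intervals (intervalIntegrable_IccExtend hab f _ _)
        (intervalIntegrable_IccExtend hab f _ _)]
  rw [dist_eq_norm, hsub, NNReal.coe_one, one_mul, Real.dist_eq, abs_sub_comm]
  exact LinearMap.mkContinuous_norm_le _ (abs_nonneg _) _

end IntervalIntegralIccExtend

theorem hasDerivAt_integral_neg_left {G : ℝ → ℝ} (hG : Continuous G) (b u : ℝ) :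
    HasDerivAt (fun u => ∫ s in -u..b, G s) (G (-u)) u := by
  have h := (intervalIntegral.integral_hasDerivAt_left (hG.intervalIntegrable _ b)
    hG.aestronglyMeasurable.stronglyMeasurableAtFilter hG.continuousAt).comp u (hasDerivAt_neg u)
  rwa [mul_neg_one, neg_neg] at h

theorem strictMono_integral_neg_left {G : ℝ → ℝ} (hG : Continuous G) (hpos : ∀ s, 0 < G s)
    (b : ℝ) : StrictMono fun u => ∫ s in -u..b, G s := by
  intro u u' huu'
  have hsplit : (∫ s in -u'..-u, G s) + ∫ s in -u..b, G s = ∫ s in -u'..b, G s :=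
    intervalIntegral.integral_add_adjacent_intervals (hG.intervalIntegrable _ _)
      (hG.intervalIntegrable _ _)
  have hpos' : 0 < ∫ s in -u'..-u, G s :=
    intervalIntegral.intervalIntegral_pos_of_pos_on (hG.intervalIntegrable _ _)
      (fun s _ => hpos s) (neg_lt_neg huu')
  dsimp only
  linarith

theorem hasStrictFDerivAt_of_apply_eq_of_injective
    {E : Type*} [NormedAddCommGroup E] [NormedSpace ℝ E] [CompleteSpace E]
    {f : E → ℝ → ℝ} {f₁ : E → ℝ → E →L[ℝ] ℝ} {f₂ : E → ℝ → ℝ} {δ : E → ℝ} {x : E} {c : ℝ}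
    (df₁ : ∀ᶠ p in 𝓝 (x, δ x), HasFDerivAt (f · p.2) (f₁ p.1 p.2) p.1)
    (df₂ : ∀ᶠ p in 𝓝 (x, δ x), HasDerivAt (f p.1 ·) (f₂ p.1 p.2) p.2)
    (cf₁ : ContinuousAt ↿f₁ (x, δ x)) (cf₂ : ContinuousAt ↿f₂ (x, δ x))
    (hf₂ : f₂ x (δ x) ≠ 0) (hinj : ∀ y, Injective (f y)) (hδ : ∀ y, f y (δ y) = c) :
    HasStrictFDerivAt δ (-(f₂ x (δ x))⁻¹ • f₁ x (δ x)) x := by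
  let F₂ (y : E) (u : ℝ) : ℝ →L[ℝ] ℝ := (1 : ℝ →L[ℝ] ℝ).smulRight (f₂ y u)
  have dF₂ : ∀ᶠ p in 𝓝 (x, δ x), HasFDerivAt (f p.1 ·) (F₂ p.1 p.2) p.2 :=
    df₂.mono fun p hp => hp.hasFDerivAt
  have cF₂ : ContinuousAt ↿F₂ (x, δ x) :=
    (ContinuousLinearMap.smulRightL ℝ ℝ ℝ 1).continuous.continuousAt.comp cf₂
  have hF₂ : (F₂ x (δ x)).IsInvertible :=
    ⟨ContinuousLinearEquiv.unitsEquivAut ℝ (Units.mk0 _ hf₂), by ext; simp [F₂]⟩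
  have hg := hasStrictFDerivAt_implicitFunctionOfBivariate df₁ dF₂ cf₁ cF₂ hF₂
  have hδg : implicitFunctionOfBivariate df₁ dF₂ cf₁ cF₂ hF₂ =ᶠ[𝓝 x] δ := by
    filter_upwards [eventually_apply_implicitFunctionOfBivariate df₁ dF₂ cf₁ cF₂ hF₂] with y hy
    exact hinj y (hy.trans ((hδ x).trans (hδ y).symm))
  refine (hg.congr_of_eventuallyEq hδg).congr_fderiv ?_
  ext
  simp only [neg_apply, ContinuousLinearMap.comp_apply, smul_apply, smul_eq_mul, neg_mul, neg_inj,
    hF₂.inverse_apply_eq, ContinuousLinearMap.smulRight_apply, one_apply_eq_self, F₂]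
  field_simp

theorem delay_functional_hasFDerivAt_general
    (r a v0 : ℝ) (hv0 : 0 < v0)
    (hle : (-r : ℝ) ≤ 0)
    (v v' : ℝ → ℝ) (hv : ∀ y, HasDerivAt v (v' y) y) (hv' : Continuous v')
    (hvlb : ∀ y, v0 ≤ v y)
    (δ : C(Set.Icc (-r) (0 : ℝ), ℝ) → ℝ)
    (hδ : ∀ φ : C(Set.Icc (-r) (0 : ℝ), ℝ),
      δ φ ∈ Set.Ioo 0 r ∧
      (∫ s in (-(δ φ))..0, v (Set.IccExtend hle (⇑φ) s)) = a) :
    ∀ φ : C(Set.Icc (-r) (0 : ℝ), ℝ),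
      ∃ L : C(Set.Icc (-r) (0 : ℝ), ℝ) →L[ℝ] ℝ,
        HasFDerivAt δ L φ ∧
        ∀ χ : C(Set.Icc (-r) (0 : ℝ), ℝ),
          L χ =
            -(∫ s in (-(δ φ))..0,
                v' (Set.IccExtend hle (⇑φ) s) * Set.IccExtend hle (⇑χ) s) /
              v (Set.IccExtend hle (⇑φ) (-(δ φ))) := by
  intro φ
  let V : C(ℝ, ℝ) := ⟨v, continuous_iff_continuousAt.2 fun y => (hv y).continuousAt⟩
  let V' : C(ℝ, ℝ) := ⟨v', hv'⟩
  have hvpos : ∀ y, 0 < v y := fun y => hv0.trans_le (hvlb y)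
  have hVψ : ∀ ψ : C(Icc (-r) (0 : ℝ), ℝ), Continuous fun s => v (IccExtend hle ψ s) :=
    fun ψ => V.continuous.comp ψ.continuous.Icc_extend'
  have hcont₁ : Continuous fun p : C(Icc (-r) (0 : ℝ), ℝ) × ℝ =>
      (intervalIntegralIccExtend hle (-p.2) 0).comp (ContinuousLinearMap.mul ℝ _ (V'.comp p.1)) :=
    ((lipschitzWith_intervalIntegralIccExtend_left hle 0).continuous.comp
      continuous_snd.neg).clm_comp ((ContinuousLinearMap.mul ℝ _).continuous.comp
        ((ContinuousMap.continuous_postcomp V').comp continuous_fst))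
  have hcont₂ : Continuous fun p : C(Icc (-r) (0 : ℝ), ℝ) × ℝ => v (IccExtend hle p.1 (-p.2)) :=
    V.continuous.comp <| continuous_eval.comp <|
      continuous_fst.prodMk ((continuous_projIcc (h := hle)).comp continuous_snd.neg)
  have key := hasStrictFDerivAt_of_apply_eq_of_injective (x := φ)
    (f := fun (ψ : C(Icc (-r) (0 : ℝ), ℝ)) u => ∫ s in -u..0, v (IccExtend hle ψ s))
    (f₁ := fun ψ u => (intervalIntegralIccExtend hle (-u) 0).comp
      (ContinuousLinearMap.mul ℝ _ (V'.comp ψ)))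
    (f₂ := fun ψ u => v (IccExtend hle ψ (-u)))
    (.of_forall fun p => (intervalIntegralIccExtend hle (-p.2) 0).hasFDerivAt.comp p.1
      (ContinuousMap.hasFDerivAt_postcomp (g := V) (g' := V') hv p.1))
    (.of_forall fun p => hasDerivAt_integral_neg_left (hVψ p.1) 0 p.2)
    hcont₁.continuousAt hcont₂.continuousAt (hvpos _).ne'
    (fun ψ => (strictMono_integral_neg_left (hVψ ψ) (fun _ => hvpos _) 0).injective)
    (fun ψ => (hδ ψ).2)
  refine ⟨_, key.hasFDerivAt, fun χ => ?_⟩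
  simp only [smul_apply, ContinuousLinearMap.comp_apply,
    ContinuousLinearMap.mul_apply', intervalIntegralIccExtend_apply, smul_eq_mul]
  rw [neg_div, neg_mul, inv_mul_eq_div]
  rfl

/-- Fréchet differentiability of the threshold delay functional
`δ : C([-r,0], ℝ) → ℝ`, which assigns to each continuous `φ` the unique `u ∈ (0,r)` with
`∫_{-u}^0 v (φ s) ds = a`.  The derivative satisfies
`Dδ(φ) χ = -(∫_{-δ(φ)}^0 v' (φ s) * χ s ds) / v (φ (-δ(φ)))`. -/
theorem delay_functional_hasFDerivAt
    (r a v0 : ℝ) (hr : 0 < r) (ha : 0 < a) (hv0 : 0 < v0)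
    (hav : a / v0 < r) (hle : (-r : ℝ) ≤ 0)
    (v v' : ℝ → ℝ) (hv : ∀ y, HasDerivAt v (v' y) y) (hv' : Continuous v')
    (hvlb : ∀ y, v0 ≤ v y)
    (δ : C(Set.Icc (-r) (0 : ℝ), ℝ) → ℝ)
    (hδ : ∀ φ : C(Set.Icc (-r) (0 : ℝ), ℝ),
      δ φ ∈ Set.Ioo 0 r ∧
      (∫ s in (-(δ φ))..0, v (Set.IccExtend hle (⇑φ) s)) = a) :
    ∀ φ : C(Set.Icc (-r) (0 : ℝ), ℝ),
      ∃ L : C(Set.Icc (-r) (0 : ℝ), ℝ) →L[ℝ] ℝ,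
        HasFDerivAt δ L φ ∧
        ∀ χ : C(Set.Icc (-r) (0 : ℝ), ℝ),
          L χ =
            -(∫ s in (-(δ φ))..0,
                v' (Set.IccExtend hle (⇑φ) s) * Set.IccExtend hle (⇑χ) s) /
              v (Set.IccExtend hle (⇑φ) (-(δ φ))) :=
  delay_functional_hasFDerivAt_general r a v0 hv0 hle v v' hv hv' hvlb δ hδ
end

section
/- Suppose (x, τ) is a solution of the threshold delay differential equation on [0,∞), and suppose there is c > 0 with |x(t)| ≤ c for all t ∈ [−r, 0]. Then |x(t)| ≤ c + dU/γ for all t ≥ −r. -/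
/-!
The production term of the equation lies in `[0, dU]`, so on `[0, ∞)` the solution satisfies
`x' = p - γ x` with `0 ≤ p ≤ dU`. Multiplying by the integrating factor `e^{γ t}` shows that
`x` can never cross the level `K` from below while `p ≤ γ K`, nor `-K` from above while
`-p ≤ γ K`; the level `K = c + dU / γ` works for both since `|x 0| ≤ c`.
-/

open Real Set

theorem le_of_hasDerivAt_sub_mul_self {f p : ℝ → ℝ} {γ K a : ℝ}
    (hf : ∀ u ≥ a, HasDerivAt f (p u - γ * f u) u) (hp : ∀ u ≥ a, p u ≤ γ * K)
    (ha : f a ≤ K) {t : ℝ} (ht : a ≤ t) : f t ≤ K := by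
  -- Integrating factor: `(f u - K) e^{γ u}` has derivative `(p u - γ K) e^{γ u} ≤ 0`.
  have hderiv : ∀ u ≥ a, HasDerivAt (fun u => (f u - K) * exp (γ * u))
      ((p u - γ * K) * exp (γ * u)) u := fun u hu =>
    (((hf u hu).sub_const K).mul ((hasDerivAt_id' u).const_mul γ).exp).congr_deriv (by ring)
  have hanti : AntitoneOn (fun u => (f u - K) * exp (γ * u)) (Ici a) :=
    antitoneOn_of_hasDerivWithinAt_nonpos (convex_Ici a)
      (fun u hu => (hderiv u hu).continuousAt.continuousWithinAt)
      (fun u hu => (hderiv u (interior_subset hu)).hasDerivWithinAt) fun u hu =>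
      mul_nonpos_of_nonpos_of_nonneg (sub_nonpos.2 (hp u (interior_subset hu))) (exp_pos _).le
  have hle : (f t - K) * exp (γ * t) ≤ 0 :=
    (hanti self_mem_Ici ht ht).trans
      (mul_nonpos_of_nonpos_of_nonneg (sub_nonpos.2 ha) (exp_pos _).le)
  exact sub_nonpos.1 (nonpos_of_mul_nonpos_left hle (exp_pos _))

theorem abs_le_of_hasDerivAt_sub_mul_self {f p : ℝ → ℝ} {γ P c a : ℝ} (hγ : 0 < γ)
    (hf : ∀ u ≥ a, HasDerivAt f (p u - γ * f u) u) (hp : ∀ u ≥ a, p u ∈ Icc 0 P)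
    (ha : |f a| ≤ c) {t : ℝ} (ht : a ≤ t) : |f t| ≤ c + P / γ := by
  have hc : 0 ≤ c := (abs_nonneg _).trans ha
  have hP : 0 ≤ P / γ := div_nonneg ((hp a le_rfl).1.trans (hp a le_rfl).2) hγ.le
  have hK : γ * (c + P / γ) = γ * c + P := by field_simp
  rw [abs_le] at ha ⊢
  have hneg : ∀ u ≥ a, HasDerivAt (fun u => -f u) (-p u - γ * -f u) u := fun u hu =>
    (hf u hu).neg.congr_deriv (by ring)
  constructor
  · have := le_of_hasDerivAt_sub_mul_self hneg (K := c + P / γ)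
      (fun u hu => by nlinarith [(hp u hu).1]) (by linarith) ht
    linarith
  · exact le_of_hasDerivAt_sub_mul_self hf (fun u hu => by nlinarith [(hp u hu).2])
      (by linarith) ht

theorem delay_production_mem_Icc {β μ T v0 vU gU v₁ v₂ g₂ : ℝ} (hβ : 0 ≤ β) (hμT : 0 ≤ μ * T)
    (hv0 : 0 < v0) (hv₁ : v0 ≤ v₁) (hv₁U : v₁ ≤ vU) (hv₂ : v0 ≤ v₂) (hg₂ : 0 ≤ g₂)
    (hg₂U : g₂ ≤ gU) :
    β * exp (-μ * T) * (v₁ / v₂) * g₂ ∈ Icc 0 (β * gU * vU / v0) := by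
  have hv₁pos : 0 < v₁ := hv0.trans_le hv₁
  have hv₂pos : 0 < v₂ := hv0.trans_le hv₂
  have hvU : 0 < vU := hv₁pos.trans_le hv₁U
  refine ⟨by positivity, ?_⟩
  have hexp : exp (-μ * T) ≤ 1 := exp_le_one_iff.2 (by linarith)
  have hratio : v₁ / v₂ ≤ vU / v0 := div_le_div₀ hvU.le hv₁U hv0 hv₂
  calc β * exp (-μ * T) * (v₁ / v₂) * g₂ ≤ β * 1 * (vU / v0) * gU := by gcongr
    _ = β * gU * vU / v0 := by ring

theorem threshold_dde_apriori_bound_general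
    (β μ γ a v0 vU g0 gU : ℝ)
    (hβ : 0 < β) (hμ : 0 < μ) (hγ : 0 < γ) (ha : 0 < a)
    (hv0 : 0 < v0) (hg0 : 0 < g0)
    (v g : ℝ → ℝ)
    (hvb : ∀ y, v0 ≤ v y ∧ v y ≤ vU) (hgb : ∀ y, g0 ≤ g y ∧ g y ≤ gU)
    (x τ : ℝ → ℝ)
    (hτpos : ∀ t, 0 ≤ t → 0 < τ t)
    (hode : ∀ t, 0 ≤ t →
      HasDerivAt x
        (β * Real.exp (-μ * τ t) * (v (x t) / v (x (t - τ t))) * g (x (t - τ t))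
          - γ * x t) t)
    (c : ℝ)
    (hinit : ∀ t ∈ Set.Icc (-(a / v0)) 0, |x t| ≤ c) :
    ∀ t, -(a / v0) ≤ t → |x t| ≤ c + β * gU * vU / v0 / γ := by
  have hproduction : ∀ t ≥ 0, β * exp (-μ * τ t) * (v (x t) / v (x (t - τ t))) *
      g (x (t - τ t)) ∈ Icc 0 (β * gU * vU / v0) := fun t ht =>
    delay_production_mem_Icc hβ.le (mul_pos hμ (hτpos t ht)).le hv0 (hvb _).1 (hvb _).2 (hvb _).1
      (hg0.le.trans (hgb _).1) (hgb _).2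
  have hx0 : |x 0| ≤ c := hinit 0 ⟨neg_nonpos.2 (div_pos ha hv0).le, le_rfl⟩
  intro t ht
  rcases le_total t 0 with hneg | hnonneg
  · have hP := hproduction 0 le_rfl
    have hbound : 0 ≤ β * gU * vU / v0 / γ := div_nonneg (hP.1.trans hP.2) hγ.le
    linarith [hinit t ⟨ht, hneg⟩]
  · exact abs_le_of_hasDerivAt_sub_mul_self hγ hode hproduction hx0 hnonneg

/-- A priori bound for solutions of the threshold delay differential
equation: if `|x t| ≤ c` on the initial interval `[-a/v0, 0]`, then
`|x t| ≤ c + dU / γ` (with `dU = β gU vU / v0`) for all `t ≥ -a/v0`. -/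
theorem threshold_dde_apriori_bound
    (β μ γ a v0 vU g0 gU : ℝ)
    (hβ : 0 < β) (hμ : 0 < μ) (hγ : 0 < γ) (ha : 0 < a)
    (hv0 : 0 < v0) (hv0U : v0 ≤ vU) (hg0 : 0 < g0) (hg0U : g0 ≤ gU)
    (v g : ℝ → ℝ) (hv : Continuous v) (hg : Continuous g)
    (hvb : ∀ y, v0 ≤ v y ∧ v y ≤ vU) (hgb : ∀ y, g0 ≤ g y ∧ g y ≤ gU)
    (x τ : ℝ → ℝ) (hx : Continuous x)
    (hτpos : ∀ t, 0 ≤ t → 0 < τ t)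
    (hthr : ∀ t, 0 ≤ t → (∫ s in (t - τ t)..t, v (x s)) = a)
    (hode : ∀ t, 0 ≤ t →
      HasDerivAt x
        (β * Real.exp (-μ * τ t) * (v (x t) / v (x (t - τ t))) * g (x (t - τ t))
          - γ * x t) t)
    (c : ℝ) (hc : 0 < c)
    (hinit : ∀ t ∈ Set.Icc (-(a / v0)) 0, |x t| ≤ c) :
    ∀ t, -(a / v0) ≤ t → |x t| ≤ c + β * gU * vU / v0 / γ :=
  threshold_dde_apriori_bound_general β μ γ a v0 vU g0 gU hβ hμ hγ ha hv0 hg0 v g hvb hgb x τ hτpos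
    hode c hinit
end

section
/- Suppose (x, τ) is a solution of the threshold delay differential equation on [0,∞). Then for every ε > 0 there exists T ≥ 0 such that dL/γ − ε ≤ x(t) ≤ dU/γ + ε for all t ≥ T. -/
/-!
The threshold condition forces `τ t ≤ a / v0`, so the production term of the equation stays in
`[dL, dU]`. Hence `x` solves `x' = p - γ x` with `dL ≤ p ≤ dU`, and for any bound `L ≤ p` the
function `e^{γt} (x t - L/γ)` has derivative `e^{γt} (p t - L) ≥ 0`. This gives
`x t - L/γ ≥ (x 0 - L/γ) e^{-γt} → 0`; the upper bound is the same argument applied to `-x`.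
-/

open Real Set Filter Topology

namespace ThresholdDDE

theorem sub_le_div_of_integral_eq {f : ℝ → ℝ} {v0 a s t : ℝ} (hv0 : 0 < v0) (hst : s ≤ t)
    (hf : IntervalIntegrable f MeasureTheory.volume s t) (hfv0 : ∀ u ∈ Icc s t, v0 ≤ f u)
    (hfa : ∫ u in s..t, f u = a) : t - s ≤ a / v0 := by
  have h := intervalIntegral.integral_mono_on hst intervalIntegrable_const hf hfv0
  rw [intervalIntegral.integral_const, hfa, smul_eq_mul] at h
  rwa [le_div_iff₀ hv0]

theorem production_ge {β μ τ r v0 vU v1 v2 g0 g : ℝ} (hβ : 0 ≤ β) (hμ : 0 ≤ μ) (hτr : τ ≤ r)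
    (hv0 : 0 < v0) (hv1 : v0 ≤ v1) (hv2 : v0 ≤ v2) (hv2U : v2 ≤ vU) (hg0 : 0 ≤ g0)
    (hg : g0 ≤ g) :
    β * (v0 / vU) * exp (-μ * r) * g0 ≤ β * exp (-μ * τ) * (v1 / v2) * g := by
  have hexp : exp (-μ * r) ≤ exp (-μ * τ) := exp_le_exp.2 (by nlinarith)
  have hv1pos : 0 < v1 := by linarith
  have hv2pos : 0 < v2 := by linarith
  have hvUpos : 0 < vU := by linarith
  have hratio : v0 / vU ≤ v1 / v2 := div_le_div₀ (by linarith) hv1 hv2pos hv2U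
  calc β * (v0 / vU) * exp (-μ * r) * g0 = β * exp (-μ * r) * (v0 / vU) * g0 := by ring
    _ ≤ β * exp (-μ * τ) * (v1 / v2) * g := by gcongr

theorem production_le {β μ τ v0 vU v1 v2 g gU : ℝ} (hβ : 0 ≤ β) (hμ : 0 ≤ μ) (hτ : 0 ≤ τ)
    (hv0 : 0 < v0) (hv1 : 0 ≤ v1) (hv1U : v1 ≤ vU) (hv2 : v0 ≤ v2) (hg : 0 ≤ g) (hgU : g ≤ gU) :
    β * exp (-μ * τ) * (v1 / v2) * g ≤ β * gU * vU / v0 := by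
  have hexp : exp (-μ * τ) ≤ 1 := exp_le_one_iff.2 (by nlinarith)
  have hv2pos : 0 < v2 := by linarith
  have hvUnonneg : 0 ≤ vU := by linarith
  have hratio : v1 / v2 ≤ vU / v0 := div_le_div₀ (by linarith) hv1U hv0 hv2
  calc β * exp (-μ * τ) * (v1 / v2) * g ≤ β * 1 * (vU / v0) * gU := by gcongr
    _ = β * gU * vU / v0 := by ring

section LinearComparison

variable {x p : ℝ → ℝ} {γ L : ℝ}

theorem monotoneOn_exp_mul_sub_div (hγ : γ ≠ 0)
    (hx : ∀ t, 0 ≤ t → HasDerivAt x (p t - γ * x t) t) (hp : ∀ t, 0 ≤ t → L ≤ p t) :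
    MonotoneOn (fun t => exp (γ * t) * (x t - L / γ)) (Ici 0) := by
  have hderiv : ∀ t, 0 ≤ t →
      HasDerivAt (fun t => exp (γ * t) * (x t - L / γ)) (exp (γ * t) * (p t - L)) t := by
    intro t ht
    have hexp : HasDerivAt (fun t => exp (γ * t)) (exp (γ * t) * γ) t := by
      simpa using ((hasDerivAt_id t).const_mul γ).exp
    refine (hexp.mul ((hx t ht).sub_const (L / γ))).congr_deriv ?_
    field_simp
    ring
  refine monotoneOn_of_hasDerivWithinAt_nonneg (convex_Ici 0)
    (fun t ht => (hderiv t ht).continuousAt.continuousWithinAt)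
    (fun t ht => (hderiv t (interior_subset ht)).hasDerivWithinAt) (fun t ht => ?_)
  exact mul_nonneg (exp_pos _).le (sub_nonneg.2 (hp t (interior_subset ht)))

theorem eventually_div_sub_le (hγ : 0 < γ) {ε : ℝ} (hε : 0 < ε)
    (hx : ∀ t, 0 ≤ t → HasDerivAt x (p t - γ * x t) t) (hp : ∀ t, 0 ≤ t → L ≤ p t) :
    ∀ᶠ t in atTop, L / γ - ε ≤ x t := by
  have hdecay : Tendsto (fun t => (x 0 - L / γ) * exp (-(γ * t))) atTop (𝓝 0) := by
    simpa using (tendsto_exp_atBot.comp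
      (tendsto_neg_atTop_atBot.comp (tendsto_id.const_mul_atTop hγ))).const_mul (x 0 - L / γ)
  filter_upwards [hdecay.eventually (lt_mem_nhds (neg_lt_zero.2 hε)), eventually_ge_atTop 0]
    with t hsmall ht
  have hmono := monotoneOn_exp_mul_sub_div hγ.ne' hx hp self_mem_Ici ht ht
  simp only [mul_zero, exp_zero, one_mul] at hmono
  have hexp : (x 0 - L / γ) * exp (-(γ * t)) ≤ x t - L / γ := by
    rw [exp_neg, ← div_eq_mul_inv, div_le_iff₀ (exp_pos _)]
    linarith
  linarith

theorem eventually_le_div_add (hγ : 0 < γ) {ε : ℝ} (hε : 0 < ε)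
    (hx : ∀ t, 0 ≤ t → HasDerivAt x (p t - γ * x t) t) (hp : ∀ t, 0 ≤ t → p t ≤ L) :
    ∀ᶠ t in atTop, x t ≤ L / γ + ε := by
  have hneg : ∀ t, 0 ≤ t → HasDerivAt (-x) (-p t - γ * (-x) t) t := fun t ht =>
    ((hx t ht).neg).congr_deriv (by simp only [Pi.neg_apply]; ring)
  filter_upwards [eventually_div_sub_le (L := -L) hγ hε hneg fun t ht => neg_le_neg (hp t ht)]
    with t ht
  rw [Pi.neg_apply, neg_div] at ht
  linarith

end LinearComparison

end ThresholdDDE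

theorem threshold_dde_absorption_general
    (β μ γ a v0 vU g0 gU : ℝ)
    (hβ : 0 < β) (hμ : 0 < μ) (hγ : 0 < γ)
    (hv0 : 0 < v0) (hg0 : 0 < g0)
    (v g : ℝ → ℝ) (hv : Continuous v)
    (hvb : ∀ y, v0 ≤ v y ∧ v y ≤ vU) (hgb : ∀ y, g0 ≤ g y ∧ g y ≤ gU)
    (x τ : ℝ → ℝ) (hx : Continuous x)
    (hτpos : ∀ t, 0 ≤ t → 0 < τ t)
    (hthr : ∀ t, 0 ≤ t → (∫ s in (t - τ t)..t, v (x s)) = a)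
    (hode : ∀ t, 0 ≤ t →
      HasDerivAt x
        (β * Real.exp (-μ * τ t) * (v (x t) / v (x (t - τ t))) * g (x (t - τ t))
          - γ * x t) t) :
    ∀ ε > 0, ∃ T, 0 ≤ T ∧ ∀ t, T ≤ t →
      β * (v0 / vU) * Real.exp (-μ * (a / v0)) * g0 / γ - ε ≤ x t ∧
      x t ≤ β * gU * vU / v0 / γ + ε := by
  intro ε hε
  have hτle : ∀ t, 0 ≤ t → τ t ≤ a / v0 := fun t ht => by
    simpa using ThresholdDDE.sub_le_div_of_integral_eq hv0 (by linarith [hτpos t ht])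
      ((hv.comp hx).intervalIntegrable _ _) (fun s _ => (hvb (x s)).1) (hthr t ht)
  have hlower := ThresholdDDE.eventually_div_sub_le hγ hε hode fun t ht =>
    ThresholdDDE.production_ge hβ.le hμ.le (hτle t ht) hv0 (hvb _).1 (hvb _).1 (hvb _).2 hg0.le
      (hgb _).1
  have hupper := ThresholdDDE.eventually_le_div_add hγ hε hode fun t ht =>
    ThresholdDDE.production_le hβ.le hμ.le (hτpos t ht).le hv0 (hv0.le.trans (hvb _).1)
      (hvb _).2 (hvb _).1 (hg0.le.trans (hgb _).1) (hgb _).2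
  obtain ⟨T, hT⟩ := eventually_atTop.1 (hlower.and hupper)
  exact ⟨max T 0, le_max_right _ _, fun t ht => hT t (le_of_max_le_left ht)⟩

/-- Absorption: every solution of the threshold delay differential
equation eventually enters any `ε`-neighbourhood of the interval `[dL/γ, dU/γ]`, where
`dL = β (v0/vU) e^{-μ a/v0} g0` and `dU = β gU vU / v0`. -/
theorem threshold_dde_absorption
    (β μ γ a v0 vU g0 gU : ℝ)
    (hβ : 0 < β) (hμ : 0 < μ) (hγ : 0 < γ) (ha : 0 < a)
    (hv0 : 0 < v0) (hv0U : v0 ≤ vU) (hg0 : 0 < g0) (hg0U : g0 ≤ gU)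
    (v g : ℝ → ℝ) (hv : Continuous v) (hg : Continuous g)
    (hvb : ∀ y, v0 ≤ v y ∧ v y ≤ vU) (hgb : ∀ y, g0 ≤ g y ∧ g y ≤ gU)
    (x τ : ℝ → ℝ) (hx : Continuous x)
    (hτpos : ∀ t, 0 ≤ t → 0 < τ t)
    (hthr : ∀ t, 0 ≤ t → (∫ s in (t - τ t)..t, v (x s)) = a)
    (hode : ∀ t, 0 ≤ t →
      HasDerivAt x
        (β * Real.exp (-μ * τ t) * (v (x t) / v (x (t - τ t))) * g (x (t - τ t))
          - γ * x t) t) :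
    ∀ ε > 0, ∃ T, 0 ≤ T ∧ ∀ t, T ≤ t →
      β * (v0 / vU) * Real.exp (-μ * (a / v0)) * g0 / γ - ε ≤ x t ∧
      x t ≤ β * gU * vU / v0 / γ + ε :=
  threshold_dde_absorption_general β μ γ a v0 vU g0 gU hβ hμ hγ hv0 hg0 v g hv hvb hgb x τ hx hτpos
    hthr hode
end

section
/- Suppose (x, τ) is a solution of the threshold delay differential equation on [0,∞), and suppose dL/γ ≤ x(t) ≤ dU/γ for all t ∈ [−r, 0]. Then dL/γ ≤ x(t) ≤ dU/γ for all t ≥ 0. -/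
/-!
The delay is pinned between `0` and `r = a/v0` by the threshold condition, since the integrand
`v ∘ x` is at least `v0`; on that range the production term lies in `[dL, dU]`. So `x` satisfies
`x' = p - γ x` with a forcing `p` trapped in `[dL, dU]`, and for any constant `b` the function
`e^{γt} (x t - b)` has derivative `e^{γt} (p t - γ b)`. With `b = dL/γ` it is nondecreasing and
with `b = dU/γ` nonincreasing, which carries the bounds at `t = 0` to all `t ≥ 0`.
-/

open Set Real

theorem le_of_hasDerivAt_sub_mul_self_of_mul_le {f p : ℝ → ℝ} {γ b : ℝ}
    (hf : ∀ t, 0 ≤ t → HasDerivAt f (p t - γ * f t) t)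
    (hp : ∀ t, 0 ≤ t → γ * b ≤ p t) (h0 : b ≤ f 0) :
    ∀ t, 0 ≤ t → b ≤ f t := by
  have hF : ∀ t, 0 ≤ t → HasDerivAt (fun s => exp (γ * s) * (f s - b))
      (exp (γ * t) * (p t - γ * b)) t := by
    intro t ht
    have hexp : HasDerivAt (fun s => exp (γ * s)) (exp (γ * t) * γ) t :=
      ((hasDerivAt_id t).const_mul γ).exp.congr_deriv (by simp)
    exact (hexp.mul ((hf t ht).sub_const b)).congr_deriv (by ring)
  have hmono : MonotoneOn (fun s => exp (γ * s) * (f s - b)) (Ici 0) := by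
    refine monotoneOn_of_hasDerivWithinAt_nonneg (f' := fun t => exp (γ * t) * (p t - γ * b))
      (convex_Ici 0) (HasDerivAt.continuousOn hF) (fun t ht => ?_) (fun t ht => ?_)
    all_goals rw [interior_Ici] at ht
    · exact (hF t ht.le).hasDerivWithinAt
    · exact mul_nonneg (exp_pos _).le (sub_nonneg.2 (hp t ht.le))
  intro t ht
  have h := hmono self_mem_Ici ht ht
  simp only [mul_zero, exp_zero, one_mul] at h
  exact sub_nonneg.1 <| nonneg_of_mul_nonneg_right (le_trans (sub_nonneg.2 h0) h) (exp_pos _)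

theorem le_of_hasDerivAt_sub_mul_self_of_le_mul {f p : ℝ → ℝ} {γ b : ℝ}
    (hf : ∀ t, 0 ≤ t → HasDerivAt f (p t - γ * f t) t)
    (hp : ∀ t, 0 ≤ t → p t ≤ γ * b) (h0 : f 0 ≤ b) :
    ∀ t, 0 ≤ t → f t ≤ b := by
  intro t ht
  refine neg_le_neg_iff.1 <| le_of_hasDerivAt_sub_mul_self_of_mul_le (f := fun s => -f s)
    (p := fun s => -p s) (γ := γ) (fun s hs => ?_) (fun s hs => ?_) (neg_le_neg h0) t ht
  · exact (hf s hs).neg.congr_deriv (by ring)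
  · linarith [hp s hs]

theorem sub_le_integral_div_of_le {w : ℝ → ℝ} {s t m : ℝ} (hst : s ≤ t) (hm : 0 < m)
    (hw : IntervalIntegrable w MeasureTheory.volume s t) (hwm : ∀ u ∈ Icc s t, m ≤ w u) :
    t - s ≤ (∫ u in s..t, w u) / m := by
  rw [le_div_iff₀ hm]
  have := intervalIntegral.integral_mono_on hst intervalIntegrable_const hw hwm
  rwa [intervalIntegral.integral_const, smul_eq_mul] at this

/-- `productionTerm β μ (τ t) (v (x t)) (v (x (t - τ t))) (g (x (t - τ t)))` is the production
term of the threshold equation. -/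
noncomputable def productionTerm (β μ τ v1 v2 w : ℝ) : ℝ := β * exp (-μ * τ) * (v1 / v2) * w

theorem le_productionTerm {β μ τ r v0 vU g0 v1 v2 w : ℝ} (hβ : 0 ≤ β) (hμ : 0 ≤ μ)
    (hτr : τ ≤ r) (hv0 : 0 < v0) (hv1 : v1 ∈ Icc v0 vU) (hv2 : v2 ∈ Icc v0 vU)
    (hg0 : 0 ≤ g0) (hw : g0 ≤ w) :
    β * (v0 / vU) * exp (-μ * r) * g0 ≤ productionTerm β μ τ v1 v2 w := by
  have hexp : exp (-μ * r) ≤ exp (-μ * τ) := exp_le_exp.2 (by nlinarith)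
  have hv : v0 / vU ≤ v1 / v2 :=
    div_le_div₀ (hv0.le.trans hv1.1) hv1.1 (hv0.trans_le hv2.1) hv2.2
  have hvU : 0 < vU := hv0.trans_le (hv1.1.trans hv1.2)
  have hv12 : 0 ≤ v1 / v2 := div_nonneg (hv0.le.trans hv1.1) (hv0.le.trans hv2.1)
  rw [productionTerm]
  calc β * (v0 / vU) * exp (-μ * r) * g0 = β * exp (-μ * r) * (v0 / vU) * g0 := by ring
    _ ≤ β * exp (-μ * τ) * (v1 / v2) * w := by gcongr

theorem productionTerm_le {β μ τ v0 vU g0 gU v1 v2 w : ℝ} (hβ : 0 ≤ β) (hμ : 0 ≤ μ)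
    (hτ : 0 ≤ τ) (hv0 : 0 < v0) (hv1 : v1 ∈ Icc v0 vU) (hv2 : v2 ∈ Icc v0 vU)
    (hg0 : 0 ≤ g0) (hw : w ∈ Icc g0 gU) :
    productionTerm β μ τ v1 v2 w ≤ β * gU * vU / v0 := by
  have hexp : exp (-μ * τ) ≤ 1 := exp_le_one_iff.2 (by nlinarith)
  have hv : v1 / v2 ≤ vU / v0 :=
    div_le_div₀ (hv0.le.trans (hv1.1.trans hv1.2)) hv1.2 hv0 hv2.1
  have hv12 : 0 ≤ v1 / v2 := div_nonneg (hv0.le.trans hv1.1) (hv0.le.trans hv2.1)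
  have hvU : 0 ≤ vU := hv0.le.trans (hv1.1.trans hv1.2)
  rw [productionTerm]
  calc β * exp (-μ * τ) * (v1 / v2) * w ≤ β * 1 * (vU / v0) * gU := by
        gcongr
        · exact hg0.trans hw.1
        · exact hw.2
    _ = β * gU * vU / v0 := by ring

theorem threshold_dde_positive_invariance_general
    (β μ γ a v0 vU g0 gU : ℝ)
    (hβ : 0 < β) (hμ : 0 < μ) (hγ : 0 < γ) (ha : 0 < a)
    (hv0 : 0 < v0) (hg0 : 0 < g0)
    (v g : ℝ → ℝ) (hv : Continuous v)
    (hvb : ∀ y, v0 ≤ v y ∧ v y ≤ vU) (hgb : ∀ y, g0 ≤ g y ∧ g y ≤ gU)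
    (x τ : ℝ → ℝ) (hx : Continuous x)
    (hτpos : ∀ t, 0 ≤ t → 0 < τ t)
    (hthr : ∀ t, 0 ≤ t → (∫ s in (t - τ t)..t, v (x s)) = a)
    (hode : ∀ t, 0 ≤ t →
      HasDerivAt x
        (β * Real.exp (-μ * τ t) * (v (x t) / v (x (t - τ t))) * g (x (t - τ t))
          - γ * x t) t)
    (hinit : ∀ t ∈ Set.Icc (-(a / v0)) 0,
      β * (v0 / vU) * Real.exp (-μ * (a / v0)) * g0 / γ ≤ x t ∧
      x t ≤ β * gU * vU / v0 / γ) :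
    ∀ t, 0 ≤ t →
      β * (v0 / vU) * Real.exp (-μ * (a / v0)) * g0 / γ ≤ x t ∧
      x t ≤ β * gU * vU / v0 / γ := by
  have hτr : ∀ t, 0 ≤ t → τ t ≤ a / v0 := fun t ht => by
    simpa only [sub_sub_cancel, hthr t ht] using sub_le_integral_div_of_le (w := fun s => v (x s))
      (sub_le_self t (hτpos t ht).le) hv0 ((hv.comp hx).intervalIntegrable _ _)
      (fun u _ => (hvb (x u)).1)
  have hx0 := hinit 0 ⟨neg_nonpos.2 (div_pos ha hv0).le, le_rfl⟩
  intro t ht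
  refine ⟨le_of_hasDerivAt_sub_mul_self_of_mul_le hode (fun s hs => ?_) hx0.1 t ht,
    le_of_hasDerivAt_sub_mul_self_of_le_mul hode (fun s hs => ?_) hx0.2 t ht⟩
  · rw [mul_div_cancel₀ _ hγ.ne']
    exact le_productionTerm hβ.le hμ.le (hτr s hs) hv0 (hvb _) (hvb _) hg0.le (hgb _).1
  · rw [mul_div_cancel₀ _ hγ.ne']
    exact productionTerm_le hβ.le hμ.le (hτpos s hs).le hv0 (hvb _) (hvb _) hg0.le (hgb _)

/-- Positive invariance of the interval `[dL/γ, dU/γ]` (with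
`dL = β (v0/vU) e^{-μ a/v0} g0` and `dU = β gU vU / v0`) for solutions of the threshold
delay differential equation. -/
theorem threshold_dde_positive_invariance
    (β μ γ a v0 vU g0 gU : ℝ)
    (hβ : 0 < β) (hμ : 0 < μ) (hγ : 0 < γ) (ha : 0 < a)
    (hv0 : 0 < v0) (hv0U : v0 ≤ vU) (hg0 : 0 < g0) (hg0U : g0 ≤ gU)
    (v g : ℝ → ℝ) (hv : Continuous v) (hg : Continuous g)
    (hvb : ∀ y, v0 ≤ v y ∧ v y ≤ vU) (hgb : ∀ y, g0 ≤ g y ∧ g y ≤ gU)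
    (x τ : ℝ → ℝ) (hx : Continuous x)
    (hτpos : ∀ t, 0 ≤ t → 0 < τ t)
    (hthr : ∀ t, 0 ≤ t → (∫ s in (t - τ t)..t, v (x s)) = a)
    (hode : ∀ t, 0 ≤ t →
      HasDerivAt x
        (β * Real.exp (-μ * τ t) * (v (x t) / v (x (t - τ t))) * g (x (t - τ t))
          - γ * x t) t)
    (hinit : ∀ t ∈ Set.Icc (-(a / v0)) 0,
      β * (v0 / vU) * Real.exp (-μ * (a / v0)) * g0 / γ ≤ x t ∧
      x t ≤ β * gU * vU / v0 / γ) :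
    ∀ t, 0 ≤ t →
      β * (v0 / vU) * Real.exp (-μ * (a / v0)) * g0 / γ ≤ x t ∧
      x t ≤ β * gU * vU / v0 / γ :=
  threshold_dde_positive_invariance_general β μ γ a v0 vU g0 gU hβ hμ hγ ha hv0 hg0 v g hv hvb hgb x
    τ hx hτpos hthr hode hinit
end

section
/- Suppose (x, τ) is a solution of the threshold delay differential equation on [0,∞), and suppose x(t) > 0 for all t ∈ [−r, 0]. Then x(t) > 0 for all t ≥ 0. -/
/-- Positivity: if a solution of the threshold delay differential
equation is strictly positive on the initial interval `[-a/v0, 0]`, then it stays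
strictly positive for all `t ≥ 0`. -/
theorem threshold_dde_positivity
    (β μ γ a v0 vU g0 gU : ℝ)
    (hβ : 0 < β) (hμ : 0 < μ) (hγ : 0 < γ) (ha : 0 < a)
    (hv0 : 0 < v0) (hv0U : v0 ≤ vU) (hg0 : 0 < g0) (hg0U : g0 ≤ gU)
    (v g : ℝ → ℝ) (hv : Continuous v) (hg : Continuous g)
    (hvb : ∀ y, v0 ≤ v y ∧ v y ≤ vU) (hgb : ∀ y, g0 ≤ g y ∧ g y ≤ gU)
    (x τ : ℝ → ℝ) (hx : Continuous x)
    (hτpos : ∀ t, 0 ≤ t → 0 < τ t)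
    (hthr : ∀ t, 0 ≤ t → (∫ s in (t - τ t)..t, v (x s)) = a)
    (hode : ∀ t, 0 ≤ t →
      HasDerivAt x
        (β * Real.exp (-μ * τ t) * (v (x t) / v (x (t - τ t))) * g (x (t - τ t))
          - γ * x t) t)
    (hinit : ∀ t ∈ Set.Icc (-(a / v0)) 0, 0 < x t) :
    ∀ t, 0 ≤ t → 0 < x t := by
  intro t ht
  by_contra hle
  push_neg at hle
  set S : Set ℝ := Set.Ici 0 ∩ x ⁻¹' Set.Iic 0 with hS
  have hSne : S.Nonempty := ⟨t, ht, hle⟩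
  have hSbdd : BddBelow S := ⟨0, fun s hs => hs.1⟩
  have hSclosed : IsClosed S := isClosed_Ici.inter (isClosed_Iic.preimage hx)
  set t0 := sInf S with ht0def
  have ht0mem : t0 ∈ S := hSclosed.csInf_mem hSne hSbdd
  have ht0nonneg : 0 ≤ t0 := ht0mem.1
  have hx0 : 0 < x 0 := hinit 0 ⟨neg_nonpos.mpr (div_pos ha hv0).le, le_refl 0⟩
  have ht0pos : 0 < t0 := by
    rcases lt_or_eq_of_le ht0nonneg with h | h
    · exact h
    · exfalso; have := ht0mem.2; rw [← h] at this
      exact absurd this (not_le.mpr hx0)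
  -- x s > 0 for s ∈ [0, t0)
  have hpos_lt : ∀ s, 0 ≤ s → s < t0 → 0 < x s := by
    intro s hs0 hst
    by_contra hc
    push_neg at hc
    exact absurd (csInf_le hSbdd ⟨hs0, hc⟩) (not_le.mpr hst)
  -- x t0 ≥ 0 by continuity from the left
  have hxt0 : x t0 = 0 := by
    have hge : 0 ≤ x t0 := by
      have htend : Filter.Tendsto x (nhdsWithin t0 (Set.Iio t0)) (nhds (x t0)) :=
        (hx.tendsto t0).mono_left nhdsWithin_le_nhds
      refine ge_of_tendsto htend ?_
      filter_upwards [self_mem_nhdsWithin,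
        Ioo_mem_nhdsLT_of_mem (a := 0) ⟨ht0pos, le_refl t0⟩] with s _ hs
      exact (hpos_lt s hs.1.le hs.2).le
    exact le_antisymm ht0mem.2 hge
  -- the derivative at t0 is strictly positive
  set D := β * Real.exp (-μ * τ t0) * (v (x t0) / v (x (t0 - τ t0))) * g (x (t0 - τ t0))
      - γ * x t0 with hDdef
  have hDpos : 0 < D := by
    rw [hDdef]
    have h5 : γ * x t0 = 0 := by rw [hxt0, mul_zero]
    have h1 : 0 < Real.exp (-μ * τ t0) := Real.exp_pos _
    have h2 : 0 < v (x t0) := lt_of_lt_of_le hv0 (hvb (x t0)).1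
    have h3 : 0 < v (x (t0 - τ t0)) := lt_of_lt_of_le hv0 (hvb _).1
    have h4 : 0 < g (x (t0 - τ t0)) := lt_of_lt_of_le hg0 (hgb _).1
    have : 0 < β * Real.exp (-μ * τ t0) * (v (x t0) / v (x (t0 - τ t0))) *
        g (x (t0 - τ t0)) := by positivity
    linarith
  -- derivative from the left: slope tends to D
  have hD := ((hode t0 ht0nonneg).hasDerivWithinAt (s := Set.Iio t0))
  rw [hasDerivWithinAt_iff_tendsto_slope] at hD
  have hslope : ∀ᶠ s in nhdsWithin t0 (Set.Iio t0 \ {t0}), 0 < slope x t0 s :=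
    hD.eventually (eventually_gt_nhds hDpos)
  have hmem : Set.Ioo 0 t0 ∈ nhdsWithin t0 (Set.Iio t0 \ {t0}) := by
    have : Set.Iio t0 \ {t0} = Set.Iio t0 := by
      ext s; simp only [Set.mem_diff, Set.mem_Iio, Set.mem_singleton_iff]
      constructor
      · exact fun h => h.1
      · exact fun h => ⟨h, ne_of_lt h⟩
    rw [this]
    exact Ioo_mem_nhdsLT_of_mem ⟨ht0pos, le_refl t0⟩
  have hne : (nhdsWithin t0 (Set.Iio t0 \ {t0})).NeBot := by
    have : Set.Iio t0 \ {t0} = Set.Iio t0 := by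
      ext s; simp only [Set.mem_diff, Set.mem_Iio, Set.mem_singleton_iff]
      exact ⟨fun h => h.1, fun h => ⟨h, ne_of_lt h⟩⟩
    rw [this]; infer_instance
  obtain ⟨s, hsl, hs⟩ := (hslope.and (Filter.eventually_mem_set.mpr hmem)).exists
  have hxs : 0 < x s := hpos_lt s hs.1.le hs.2
  have hslope_eq : slope x t0 s = x s / (s - t0) := by
    rw [slope_def_field, hxt0, sub_zero]
  rw [hslope_eq] at hsl
  have hneg : s - t0 < 0 := sub_neg.mpr hs.2
  have : x s / (s - t0) < 0 := div_neg_of_pos_of_neg hxs hneg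
  linarith
end

section
/- Suppose (x, τ) is an entire solution of the threshold delay differential equation, i.e. the threshold and differential equation conditions hold for every t ∈ ℝ, and suppose x is bounded on ℝ. Then x(t) > 0 for all t ∈ ℝ. -/
open Real Filter Topology

/-!
The production term is strictly positive, so `x' > -γ x`: the integrating factor makes
`t ↦ exp (γ t) * x t` strictly increasing. Boundedness of `x` forces this function to tend to `0`
at `-∞`, hence it is positive everywhere.
-/

theorem StrictMono.lt_of_tendsto_atBot {α β : Type*} [TopologicalSpace α] [Preorder α]
    [OrderClosedTopology α] [PartialOrder β] [IsCodirectedOrder β] [NoMinOrder β] {f : β → α}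
    {a : α} (hf : StrictMono f) (ha : Tendsto f atBot (𝓝 a)) (b : β) : a < f b :=
  have ⟨c, hcb⟩ := exists_lt b
  (hf.monotone.le_of_tendsto ha c).trans_lt (hf hcb)

theorem hasDerivAt_exp_mul_mul_of_hasDerivAt_sub_mul {x : ℝ → ℝ} {p γ t : ℝ}
    (hx : HasDerivAt x (p - γ * x t) t) :
    HasDerivAt (fun s => exp (γ * s) * x s) (exp (γ * t) * p) t := by
  have hexp : HasDerivAt (fun s => exp (γ * s)) (exp (γ * t) * γ) t := by
    simpa using ((hasDerivAt_id t).const_mul γ).exp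
  exact (hexp.mul hx).congr_deriv (by ring)

theorem tendsto_exp_mul_mul_atBot_zero_of_bounded {x : ℝ → ℝ} {γ M : ℝ} (hγ : 0 < γ)
    (hM : ∀ t, |x t| ≤ M) : Tendsto (fun s => exp (γ * s) * x s) atBot (𝓝 0) :=
  (tendsto_exp_atBot.comp (tendsto_id.const_mul_atBot hγ)).zero_mul_isBoundedUnder_le
    ⟨M, eventually_map.2 (Eventually.of_forall hM)⟩

theorem pos_of_hasDerivAt_sub_mul_of_bounded {x P : ℝ → ℝ} {γ M : ℝ} (hγ : 0 < γ)
    (hP : ∀ t, 0 < P t) (hx : ∀ t, HasDerivAt x (P t - γ * x t) t) (hM : ∀ t, |x t| ≤ M)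
    (t : ℝ) : 0 < x t := by
  have hmono : StrictMono fun s => exp (γ * s) * x s :=
    strictMono_of_hasDerivAt_pos (fun s => hasDerivAt_exp_mul_mul_of_hasDerivAt_sub_mul (hx s))
      fun s => mul_pos (exp_pos _) (hP s)
  exact pos_of_mul_pos_right
    (hmono.lt_of_tendsto_atBot (tendsto_exp_mul_mul_atBot_zero_of_bounded hγ hM) t)
    (exp_pos _).le

theorem threshold_dde_entire_bounded_positive_general
    (β μ γ v0 vU g0 gU : ℝ)
    (hβ : 0 < β) (hγ : 0 < γ)
    (hv0 : 0 < v0) (hg0 : 0 < g0)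
    (v g : ℝ → ℝ)
    (hvb : ∀ y, v0 ≤ v y ∧ v y ≤ vU) (hgb : ∀ y, g0 ≤ g y ∧ g y ≤ gU)
    (x τ : ℝ → ℝ)
    (hode : ∀ t : ℝ,
      HasDerivAt x
        (β * Real.exp (-μ * τ t) * (v (x t) / v (x (t - τ t))) * g (x (t - τ t))
          - γ * x t) t)
    (hbd : ∃ M : ℝ, ∀ t, |x t| ≤ M) :
    ∀ t : ℝ, 0 < x t := by
  obtain ⟨M, hM⟩ := hbd
  have hv : ∀ y, 0 < v y := fun y => hv0.trans_le (hvb y).1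
  have hprod : ∀ t, 0 < β * exp (-μ * τ t) * (v (x t) / v (x (t - τ t))) * g (x (t - τ t)) :=
    fun t => mul_pos (mul_pos (mul_pos hβ (exp_pos _)) (div_pos (hv _) (hv _)))
      (hg0.trans_le (hgb _).1)
  exact pos_of_hasDerivAt_sub_mul_of_bounded hγ hprod hode hM

/-- Every bounded entire solution of the threshold delay differential
equation is strictly positive. -/
theorem threshold_dde_entire_bounded_positive
    (β μ γ a v0 vU g0 gU : ℝ)
    (hβ : 0 < β) (hμ : 0 < μ) (hγ : 0 < γ) (ha : 0 < a)
    (hv0 : 0 < v0) (hv0U : v0 ≤ vU) (hg0 : 0 < g0) (hg0U : g0 ≤ gU)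
    (v g : ℝ → ℝ) (hv : Continuous v) (hg : Continuous g)
    (hvb : ∀ y, v0 ≤ v y ∧ v y ≤ vU) (hgb : ∀ y, g0 ≤ g y ∧ g y ≤ gU)
    (x τ : ℝ → ℝ) (hx : Continuous x)
    (hτpos : ∀ t : ℝ, 0 < τ t)
    (hthr : ∀ t : ℝ, (∫ s in (t - τ t)..t, v (x s)) = a)
    (hode : ∀ t : ℝ,
      HasDerivAt x
        (β * Real.exp (-μ * τ t) * (v (x t) / v (x (t - τ t))) * g (x (t - τ t))
          - γ * x t) t)
    (hbd : ∃ M : ℝ, ∀ t, |x t| ≤ M) :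
    ∀ t : ℝ, 0 < x t :=
  threshold_dde_entire_bounded_positive_general β μ γ v0 vU g0 gU hβ hγ hv0 hg0 v g hvb hgb x τ hode
    hbd
end

section
/- Let β, μ, γ, a > 0 and let v, g : ℝ → ℝ be continuous with v(x) ≥ v0 > 0 and 0 < g0 ≤ g(x) ≤ gU for all x ∈ ℝ. Assume in addition that g and v are both monotone nonincreasing on [0,∞). Then there exists exactly one ξ ≥ 0 satisfying the steady state equation β e^{−μ a/v(ξ)} g(ξ) = γ ξ. -/
/-- If the production nonlinearity `g` and the velocity `v` are both
monotone nonincreasing on `[0, ∞)`, then the threshold delay equation has exactly one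
steady state `ξ ≥ 0`, i.e. exactly one `ξ ≥ 0` with `β e^{-μ a / v ξ} g ξ = γ ξ`. -/
theorem threshold_dde_unique_steady_state
    (β μ γ a v0 g0 gU : ℝ)
    (hβ : 0 < β) (hμ : 0 < μ) (hγ : 0 < γ) (ha : 0 < a)
    (hv0 : 0 < v0) (hg0 : 0 < g0)
    (v g : ℝ → ℝ) (hv : Continuous v) (hg : Continuous g)
    (hvlb : ∀ y, v0 ≤ v y) (hgb : ∀ y, g0 ≤ g y ∧ g y ≤ gU)
    (hgmono : AntitoneOn g (Set.Ici 0)) (hvmono : AntitoneOn v (Set.Ici 0)) :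
    ∃! ξ : ℝ, 0 ≤ ξ ∧ β * Real.exp (-μ * (a / v ξ)) * g ξ = γ * ξ := by
  have hvpos : ∀ y, 0 < v y := fun y => lt_of_lt_of_le hv0 (hvlb y)
  have hgpos : ∀ y, 0 < g y := fun y => lt_of_lt_of_le hg0 (hgb y).1
  set F : ℝ → ℝ := fun ξ => β * Real.exp (-μ * (a / v ξ)) * g ξ - γ * ξ with hF
  have hFcont : Continuous F := by
    apply Continuous.sub
    · exact (continuous_const.mul ((continuous_const.mul
        (continuous_const.div hv (fun y => (hvpos y).ne'))).rexp)).mul hg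
    · exact continuous_const.mul continuous_id
  -- antitone of the production term on [0,∞)
  have hProd : ∀ x y : ℝ, 0 ≤ x → x ≤ y →
      β * Real.exp (-μ * (a / v y)) * g y ≤ β * Real.exp (-μ * (a / v x)) * g x := by
    intro x y hx hxy
    have hy : (0:ℝ) ≤ y := le_trans hx hxy
    have hvxy : v y ≤ v x := hvmono hx hy hxy
    have hdiv : a / v x ≤ a / v y :=
      div_le_div_of_nonneg_left ha.le (hvpos y) hvxy
    have hexp : Real.exp (-μ * (a / v y)) ≤ Real.exp (-μ * (a / v x)) := by
      apply Real.exp_le_exp.2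
      have := mul_le_mul_of_nonneg_left hdiv hμ.le
      linarith
    have hgxy : g y ≤ g x := hgmono hx hy hxy
    have h1 : Real.exp (-μ * (a / v y)) * g y ≤ Real.exp (-μ * (a / v x)) * g x :=
      mul_le_mul hexp hgxy (hgpos y).le (Real.exp_pos _).le
    have h2 := mul_le_mul_of_nonneg_left h1 hβ.le
    calc β * Real.exp (-μ * (a / v y)) * g y
        = β * (Real.exp (-μ * (a / v y)) * g y) := by ring
      _ ≤ β * (Real.exp (-μ * (a / v x)) * g x) := h2
      _ = β * Real.exp (-μ * (a / v x)) * g x := by ring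
  -- existence via IVT on [0, M]
  have hgU : 0 < gU := lt_of_lt_of_le hg0 (le_trans (hgb 0).1 (hgb 0).2)
  obtain ⟨M, hMpos, hγM⟩ : ∃ M : ℝ, 0 < M ∧ β * gU < γ * M := by
    refine ⟨β * gU / γ + 1, by positivity, ?_⟩
    rw [mul_add, mul_one, mul_div_cancel₀ _ hγ.ne']
    linarith
  have hF0 : 0 < F 0 := by
    simp only [hF, mul_zero, sub_zero]
    exact mul_pos (mul_pos hβ (Real.exp_pos _)) (hgpos 0)
  have hFM : F M < 0 := by
    have hexp : Real.exp (-μ * (a / v M)) ≤ 1 := by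
      apply Real.exp_le_one_iff.2
      have : 0 ≤ a / v M := le_of_lt (div_pos ha (hvpos M))
      nlinarith
    have hgle : g M ≤ gU := (hgb M).2
    have : β * Real.exp (-μ * (a / v M)) * g M ≤ β * gU := by
      have h1 : Real.exp (-μ * (a / v M)) * g M ≤ 1 * gU :=
        mul_le_mul hexp hgle (hgpos M).le zero_le_one
      have h2 := mul_le_mul_of_nonneg_left h1 hβ.le
      calc β * Real.exp (-μ * (a / v M)) * g M
          = β * (Real.exp (-μ * (a / v M)) * g M) := by ring
        _ ≤ β * (1 * gU) := h2
        _ = β * gU := by ring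
    simp only [hF]
    linarith
  have hIVT : (0:ℝ) ∈ F '' Set.Icc 0 M := by
    apply intermediate_value_Icc' hMpos.le hFcont.continuousOn
    exact ⟨hFM.le, hF0.le⟩
  obtain ⟨ξ, hξmem, hξeq⟩ := hIVT
  have hξ0 : 0 ≤ ξ := hξmem.1
  have hξsol : β * Real.exp (-μ * (a / v ξ)) * g ξ = γ * ξ := by
    have : F ξ = 0 := hξeq
    simp only [hF] at this
    linarith
  refine ⟨ξ, ⟨hξ0, hξsol⟩, ?_⟩
  rintro y ⟨hy0, hysol⟩
  by_contra hne
  rcases lt_or_gt_of_ne hne with h | h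
  · have := hProd y ξ hy0 h.le
    rw [hysol, hξsol] at this
    nlinarith
  · have := hProd ξ y hξ0 h.le
    rw [hysol, hξsol] at this
    nlinarith
end

section
/- Let p > 0 and r > 0 with r ≠ 1, and define f(x) = p(1 − r)x^p / ((1 + x^p)(r + x^p)) for x > 0 (with x^p the real power). Then f(1) = p(1 − r)/(2(1 + r)) and |f(1)| ≤ p/2. Moreover the function x ↦ |f(x)| attains its unique global maximum on (0,∞) at x = r^{1/(2p)}, where f(r^{1/(2p)}) = p(1 − √r)/(1 + √r); in particular |f(x)| ≤ p|1 − √r|/(1 + √r) ≤ p for all x > 0, with equality in the first inequality if and only if x = r^{1/(2p)}. -/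
/-- The function `f(x, p, r) = p (1 - r) x^p / ((1 + x^p)(r + x^p))` from
Proposition `fxpr` of the paper (`x ^ p` is the real power). -/
noncomputable def paperF (x p r : ℝ) : ℝ :=
  p * (1 - r) * x ^ p / ((1 + x ^ p) * (r + x ^ p))

/-!
With `y = x ^ p` we have `|f x| = p |1 - r| · y / ((1 + y)(r + y))`. Writing `r = s²`, the
denominator is `(1 + s)² y + (y - s)²`, so the ratio is at most `1 / (1 + s)²`, with equality
exactly when `y = s`, i.e. `x = r ^ (1 / (2p))`; and `|1 - r| / (1 + s)² = |1 - s| / (1 + s)`.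
-/

open Real

section RationalBound

variable {s y : ℝ}

theorem one_add_mul_sq_add (s y : ℝ) :
    (1 + y) * (s ^ 2 + y) = (1 + s) ^ 2 * y + (y - s) ^ 2 := by
  ring

theorem div_one_add_mul_sq_add_le (hy : 0 < y) (hs : 0 ≤ s) :
    y / ((1 + y) * (s ^ 2 + y)) ≤ 1 / (1 + s) ^ 2 := by
  rw [div_le_div_iff₀ (by positivity) (by positivity), one_mul, one_add_mul_sq_add]
  nlinarith [sq_nonneg (y - s)]

theorem div_one_add_mul_sq_add_eq_iff (hy : 0 < y) (hs : 0 ≤ s) :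
    y / ((1 + y) * (s ^ 2 + y)) = 1 / (1 + s) ^ 2 ↔ y = s := by
  rw [div_eq_div_iff (by positivity) (by positivity), one_mul, one_add_mul_sq_add]
  constructor
  · intro h
    have hsq : (y - s) ^ 2 = 0 := by linarith
    linarith [pow_eq_zero_iff two_ne_zero |>.mp hsq]
  · rintro rfl
    ring

end RationalBound

theorem abs_one_sub_le_one_add {s : ℝ} (hs : 0 ≤ s) : |1 - s| ≤ 1 + s :=
  abs_le.2 ⟨by linarith, by linarith⟩

theorem abs_one_sub_eq_mul_sqrt {r : ℝ} (hr : 0 ≤ r) : |1 - r| = |1 - √r| * (1 + √r) := by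
  conv_lhs => rw [← sq_sqrt hr]
  rw [show 1 - √r ^ 2 = (1 - √r) * (1 + √r) by ring, abs_mul,
    abs_of_nonneg (by positivity : 0 ≤ 1 + √r)]

theorem mul_abs_one_sub_mul_one_div_sq {r : ℝ} (hr : 0 ≤ r) (c : ℝ) :
    c * |1 - r| * (1 / (1 + √r) ^ 2) = c * |1 - √r| / (1 + √r) := by
  have : 0 < 1 + √r := by positivity
  rw [abs_one_sub_eq_mul_sqrt hr]
  field_simp

theorem rpow_one_div_two_mul_rpow {p r : ℝ} (hp : p ≠ 0) (hr : 0 ≤ r) :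
    (r ^ (1 / (2 * p))) ^ p = √r := by
  rw [← rpow_mul hr, show 1 / (2 * p) * p = 1 / 2 by field_simp, sqrt_eq_rpow]

theorem rpow_eq_sqrt_iff {p r x : ℝ} (hp : 0 < p) (hr : 0 ≤ r) (hx : 0 ≤ x) :
    x ^ p = √r ↔ x = r ^ (1 / (2 * p)) := by
  rw [← rpow_one_div_two_mul_rpow hp.ne' hr]
  exact rpow_left_inj hx (rpow_nonneg hr _) hp.ne'

section PaperF

variable {x p r : ℝ}

theorem paperF_one (p r : ℝ) : paperF 1 p r = p * (1 - r) / (2 * (1 + r)) := by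
  rw [paperF, one_rpow]
  ring

theorem abs_paperF_one_le (hp : 0 ≤ p) (hr : 0 ≤ r) : |paperF 1 p r| ≤ p / 2 := by
  have hr1 : 0 < 1 + r := by positivity
  rw [paperF_one, abs_div, abs_mul, abs_of_nonneg hp, abs_of_pos (by positivity : 0 < 2 * (1 + r)),
    div_le_div_iff₀ (by positivity) two_pos]
  nlinarith [abs_one_sub_le_one_add hr]

theorem paperF_rpow_one_div_two_mul (hp : p ≠ 0) (hr : 0 < r) :
    paperF (r ^ (1 / (2 * p))) p r = p * (1 - √r) / (1 + √r) := by
  rw [paperF, rpow_one_div_two_mul_rpow hp hr.le, div_eq_div_iff (by positivity) (by positivity)]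
  linear_combination p * (1 + √r) * sq_sqrt hr.le

theorem abs_paperF (hp : 0 ≤ p) (hr : 0 < r) (hx : 0 < x) :
    |paperF x p r| = p * |1 - r| * (x ^ p / ((1 + x ^ p) * (r + x ^ p))) := by
  have hy : 0 < x ^ p := rpow_pos_of_pos hx p
  rw [paperF, abs_div, abs_mul, abs_mul, abs_of_nonneg hp, abs_of_pos hy,
    abs_of_pos (by positivity : 0 < (1 + x ^ p) * (r + x ^ p))]
  ring

theorem abs_paperF_le (hp : 0 ≤ p) (hr : 0 < r) (hx : 0 < x) :
    |paperF x p r| ≤ p * |1 - √r| / (1 + √r) := by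
  have hratio := div_one_add_mul_sq_add_le (rpow_pos_of_pos hx p) (sqrt_nonneg r)
  rw [sq_sqrt hr.le] at hratio
  rw [abs_paperF hp hr hx, ← mul_abs_one_sub_mul_one_div_sq hr.le]
  gcongr

theorem abs_paperF_eq_iff (hp : 0 < p) (hr : 0 < r) (hr1 : r ≠ 1) (hx : 0 < x) :
    |paperF x p r| = p * |1 - √r| / (1 + √r) ↔ x = r ^ (1 / (2 * p)) := by
  have hratio := div_one_add_mul_sq_add_eq_iff (rpow_pos_of_pos hx p) (sqrt_nonneg r)
  rw [sq_sqrt hr.le] at hratio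
  have hc : p * |1 - r| ≠ 0 := mul_ne_zero hp.ne' (abs_ne_zero.2 (sub_ne_zero.2 hr1.symm))
  rw [abs_paperF hp.le hr hx, ← mul_abs_one_sub_mul_one_div_sq hr.le, mul_right_inj' hc,
    hratio, rpow_eq_sqrt_iff hp hr.le hx.le]

end PaperF

/-- For `p > 0`, `r > 0`, `r ≠ 1`: `f(1) = p(1-r)/(2(1+r))` with
`|f(1)| ≤ p/2`; the function `x ↦ |f(x)|` attains its unique global maximum on `(0, ∞)`
at `x = r^{1/(2p)}`, where `f(r^{1/(2p)}) = p(1-√r)/(1+√r)`; in particular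
`|f(x)| ≤ p|1-√r|/(1+√r) ≤ p` for all `x > 0`, with equality in the first inequality
iff `x = r^{1/(2p)}`. -/
theorem paperF_max
    (p r : ℝ) (hp : 0 < p) (hr : 0 < r) (hr1 : r ≠ 1) :
    paperF 1 p r = p * (1 - r) / (2 * (1 + r)) ∧
    |paperF 1 p r| ≤ p / 2 ∧
    paperF (r ^ (1 / (2 * p))) p r = p * (1 - Real.sqrt r) / (1 + Real.sqrt r) ∧
    (∀ x : ℝ, 0 < x → |paperF x p r| ≤ p * |1 - Real.sqrt r| / (1 + Real.sqrt r)) ∧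
    p * |1 - Real.sqrt r| / (1 + Real.sqrt r) ≤ p ∧
    (∀ x : ℝ, 0 < x →
      (|paperF x p r| = p * |1 - Real.sqrt r| / (1 + Real.sqrt r) ↔
        x = r ^ (1 / (2 * p)))) := by
  have hmax_le : p * |1 - √r| / (1 + √r) ≤ p := by
    rw [div_le_iff₀ (by positivity)]
    nlinarith [abs_one_sub_le_one_add (sqrt_nonneg r)]
  exact ⟨paperF_one p r, abs_paperF_one_le hp.le hr.le,
    paperF_rpow_one_div_two_mul hp.ne' hr, fun _ hx => abs_paperF_le hp.le hr hx, hmax_le,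
    fun _ hx => abs_paperF_eq_iff hp hr hr1 hx⟩
end

section
/- Let γ, μ, τ > 0 and A, Q ∈ ℝ with Q = 0 and A > 0, and suppose A·τ·max(μ, γ) < γ. Then every λ ∈ ℂ satisfying the characteristic equation Δ(λ) = 0 has Re λ < 0. -/
/-!
For `Q = 0` the identity `λ ∫_{-τ}^0 e^{λs} ds = 1 - e^{-λτ}` turns `Δ(λ) = 0` into
`λ + γ = A (λ + μ) ∫_{-τ}^0 e^{λs} ds`. If `Re λ ≥ 0`, the integral has norm at most `τ` and
`γ ‖λ + μ‖ ≤ max(μ, γ) ‖λ + γ‖`, so `γ ‖λ + γ‖ ≤ A τ max(μ, γ) ‖λ + γ‖ < γ ‖λ + γ‖`.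
-/

/-- The characteristic function `Δ(λ) = λ + γ - A - (Q - A) e^{-λτ} - μA ∫_{-τ}^0 e^{λs} ds`
of the linearization of the threshold delay equation at a steady state. -/
noncomputable def charFun (γ μ τ A Q : ℝ) (lam : ℂ) : ℂ :=
  lam + (γ : ℂ) - (A : ℂ) - ((Q : ℂ) - (A : ℂ)) * Complex.exp (-lam * (τ : ℂ)) -
    (μ : ℂ) * (A : ℂ) * ∫ s in (-τ)..(0 : ℝ), Complex.exp (lam * (s : ℂ))

open Complex

theorem Complex.norm_le_norm_of_abs_re_le_of_abs_im_le {z w : ℂ} (hre : |z.re| ≤ |w.re|)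
    (him : |z.im| ≤ |w.im|) : ‖z‖ ≤ ‖w‖ := by
  rw [Complex.norm_def, Complex.norm_def, normSq_apply, normSq_apply]
  exact Real.sqrt_le_sqrt (by nlinarith [sq_le_sq.mpr hre, sq_le_sq.mpr him])

theorem mul_integral_exp_mul_eq_one_sub_exp (lam : ℂ) (τ : ℝ) :
    lam * ∫ s in (-τ)..(0 : ℝ), exp (lam * s) = 1 - exp (-lam * τ) := by
  rcases eq_or_ne lam 0 with rfl | hlam
  · simp
  · rw [integral_exp_mul_complex hlam, mul_div_cancel₀ _ hlam]
    simp

theorem norm_integral_exp_mul_le {lam : ℂ} (hlam : 0 ≤ lam.re) {τ : ℝ} (hτ : 0 ≤ τ) :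
    ‖∫ s in (-τ)..(0 : ℝ), exp (lam * s)‖ ≤ τ := by
  have hbound : ∀ s ∈ Set.uIoc (-τ) 0, ‖exp (lam * s)‖ ≤ 1 := by
    intro s hs
    rw [Set.uIoc_of_le (by linarith)] at hs
    rw [norm_exp, Real.exp_le_one_iff, re_mul_ofReal]
    exact mul_nonpos_of_nonneg_of_nonpos hlam hs.2
  simpa [abs_of_nonneg hτ] using intervalIntegral.norm_integral_le_of_norm_le_const hbound

theorem charFun_of_Q_eq_zero (γ μ τ A : ℝ) (lam : ℂ) :
    charFun γ μ τ A 0 lam =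
      lam + γ - A * (lam + μ) * ∫ s in (-τ)..(0 : ℝ), exp (lam * s) := by
  rw [charFun, ofReal_zero]
  linear_combination (A : ℂ) * mul_integral_exp_mul_eq_one_sub_exp lam τ

theorem mul_norm_add_ofReal_le {lam : ℂ} (hlam : 0 ≤ lam.re) {γ μ : ℝ} (hγ : 0 ≤ γ)
    (hμ : 0 ≤ μ) : γ * ‖lam + μ‖ ≤ max μ γ * ‖lam + γ‖ := by
  have hM : 0 ≤ max μ γ := le_max_of_le_right hγ
  have hre : |(γ * (lam + μ)).re| ≤ |(max μ γ * (lam + γ)).re| := by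
    simp only [re_ofReal_mul, add_re, ofReal_re]
    rw [abs_of_nonneg (by positivity), abs_of_nonneg (by positivity)]
    nlinarith [le_max_left μ γ, le_max_right μ γ]
  have him : |(γ * (lam + μ)).im| ≤ |(max μ γ * (lam + γ)).im| := by
    simp only [im_ofReal_mul, add_im, ofReal_im, add_zero, abs_mul, abs_of_nonneg hγ,
      abs_of_nonneg hM]
    gcongr
    exact le_max_right μ γ
  simpa [norm_mul, abs_of_nonneg hγ, abs_of_nonneg hM] using
    norm_le_norm_of_abs_re_le_of_abs_im_le hre him

/-- If `Q = 0`, `A > 0` and `A τ max(μ, γ) < γ`, then every root of the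
characteristic equation `Δ(λ) = 0` has negative real part. -/
theorem charFun_roots_neg_re_of_A_pos
    (γ μ τ A Q : ℝ) (hγ : 0 < γ) (hμ : 0 < μ) (hτ : 0 < τ)
    (hQ : Q = 0) (hA : 0 < A) (hcond : A * τ * max μ γ < γ) :
    ∀ lam : ℂ, charFun γ μ τ A Q lam = 0 → lam.re < 0 := by
  intro lam hroot
  by_contra! hlam
  set I := ∫ s in (-τ)..(0 : ℝ), exp (lam * s)
  have hroot' : lam + γ = A * (lam + μ) * I := by
    rw [hQ, charFun_of_Q_eq_zero] at hroot
    exact sub_eq_zero.mp hroot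
  have hpos : 0 < ‖lam + γ‖ := by
    have := (le_abs_self _).trans (abs_re_le_norm (lam + γ))
    rw [add_re, ofReal_re] at this
    linarith
  have hle : γ * ‖lam + γ‖ ≤ A * τ * max μ γ * ‖lam + γ‖ :=
    calc γ * ‖lam + γ‖ = A * ‖I‖ * (γ * ‖lam + μ‖) := by
          rw [hroot', norm_mul, norm_mul, norm_real, Real.norm_of_nonneg hA.le]; ring
      _ ≤ A * τ * (max μ γ * ‖lam + γ‖) := by
          have hI := mul_le_mul_of_nonneg_left (norm_integral_exp_mul_le hlam hτ.le) hA.le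
          exact mul_le_mul hI (mul_norm_add_ofReal_le hlam hγ.le hμ.le) (by positivity)
            (by positivity)
      _ = A * τ * max μ γ * ‖lam + γ‖ := by ring
  exact (mul_lt_mul_of_pos_right hcond hpos).not_ge hle
end

section
/- Let γ > 0, τ > 0 and c ∈ ℝ with |c| < γ. Then every λ ∈ ℂ satisfying λ + γ = c·exp(−λτ) has Re λ < 0. -/
/-! If `Re λ ≥ 0`, then `|λ + γ| ≥ Re λ + γ ≥ γ`, while `|c e^{-λτ}| = |c| e^{-τ Re λ} ≤ |c| < γ`,
so `λ` cannot be a root. -/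

namespace Complex

lemma norm_exp_neg_mul_ofReal_le_one {z : ℂ} {τ : ℝ} (hz : 0 ≤ z.re) (hτ : 0 ≤ τ) :
    ‖exp (-z * τ)‖ ≤ 1 := by
  rw [norm_exp, Real.exp_le_one_iff]
  simpa using mul_nonneg hz hτ

lemma le_norm_add_ofReal {z : ℂ} (hz : 0 ≤ z.re) (γ : ℝ) : γ ≤ ‖z + γ‖ :=
  calc γ ≤ (z + γ).re := by simpa using hz
    _ ≤ ‖z + γ‖ := re_le_norm _

lemma re_neg_of_add_eq_mul_exp {γ τ : ℝ} {c z : ℂ} (hτ : 0 ≤ τ) (hc : ‖c‖ < γ)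
    (hz : z + γ = c * exp (-z * τ)) : z.re < 0 := by
  by_contra! hre
  have hroot : γ ≤ ‖c * exp (-z * τ)‖ := hz ▸ le_norm_add_ofReal hre γ
  have hdelay : ‖c * exp (-z * τ)‖ ≤ ‖c‖ := by
    rw [norm_mul]
    exact mul_le_of_le_one_right (norm_nonneg c) (norm_exp_neg_mul_ofReal_le_one hre hτ)
  linarith

end Complex

theorem constant_delay_char_roots_neg_re_general
    (γ τ c : ℝ) (hτ : 0 < τ) (hc : |c| < γ) :
    ∀ lam : ℂ, lam + (γ : ℂ) = (c : ℂ) * Complex.exp (-lam * (τ : ℂ)) → lam.re < 0 :=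
  fun _ hroot ↦ Complex.re_neg_of_add_eq_mul_exp hτ.le
    (by rwa [Complex.norm_real, Real.norm_eq_abs]) hroot

/-- For `γ, τ > 0` and `|c| < γ`, every complex root of the
characteristic equation `λ + γ = c e^{-λτ}` has negative real part. -/
theorem constant_delay_char_roots_neg_re
    (γ τ c : ℝ) (hγ : 0 < γ) (hτ : 0 < τ) (hc : |c| < γ) :
    ∀ lam : ℂ, lam + (γ : ℂ) = (c : ℂ) * Complex.exp (-lam * (τ : ℂ)) → lam.re < 0 :=
  constant_delay_char_roots_neg_re_general γ τ c hτ hc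
end

section
/- Let γ, μ, τ > 0 and A, Q ∈ ℝ, and suppose Q + μτA > γ. Then Δ(0) = γ − Q − μτA < 0 and there exists a real λ₀ > 0 with Δ(λ₀) = 0; that is, the characteristic equation has a positive real root. -/
/-- Real version of the characteristic function. -/
noncomputable def charFunR (γ μ τ A Q : ℝ) (l : ℝ) : ℝ :=
  l + γ - A - (Q - A) * Real.exp (-l * τ) -
    μ * A * ∫ s in (-τ)..(0 : ℝ), Real.exp (l * s)

lemma charFun_ofReal (γ μ τ A Q l : ℝ) :
    charFun γ μ τ A Q (l : ℂ) = ((charFunR γ μ τ A Q l : ℝ) : ℂ) := by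
  have h : (∫ s in (-τ)..(0 : ℝ), Complex.exp ((l : ℂ) * (s : ℂ)))
      = ((∫ s in (-τ)..(0 : ℝ), Real.exp (l * s) : ℝ) : ℂ) := by
    rw [← intervalIntegral.integral_ofReal]
    congr 1; funext s; push_cast [Complex.ofReal_exp]; ring_nf
  unfold charFun charFunR
  rw [h]
  push_cast [Complex.ofReal_exp]
  ring_nf

lemma charFunR_continuous (γ μ τ A Q : ℝ) : Continuous (charFunR γ μ τ A Q) := by
  unfold charFunR
  have hint : Continuous fun l : ℝ => ∫ s in (-τ)..(0 : ℝ), Real.exp (l * s) := by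
    apply intervalIntegral.continuous_parametric_intervalIntegral_of_continuous'
    exact Real.continuous_exp.comp (continuous_fst.mul continuous_snd)
  fun_prop

/-- If `Q + μτA > γ`, then `Δ(0) = γ - Q - μτA < 0` and the
characteristic equation `Δ(λ) = 0` has a positive real root. -/
theorem charFun_pos_real_root_of_unstable
    (γ μ τ A Q : ℝ) (hγ : 0 < γ) (hμ : 0 < μ) (hτ : 0 < τ)
    (hcond : γ < Q + μ * τ * A) :
    charFun γ μ τ A Q 0 = ((γ - Q - μ * τ * A : ℝ) : ℂ) ∧
    γ - Q - μ * τ * A < 0 ∧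
    ∃ lam0 : ℝ, 0 < lam0 ∧ charFun γ μ τ A Q (lam0 : ℂ) = 0 := by
  have hR0 : charFunR γ μ τ A Q 0 = γ - Q - μ * τ * A := by
    unfold charFunR
    simp only [zero_mul, neg_zero, Real.exp_zero]
    rw [intervalIntegral.integral_const]
    simp; ring
  have h0 : charFun γ μ τ A Q 0 = ((γ - Q - μ * τ * A : ℝ) : ℂ) := by
    have := charFun_ofReal γ μ τ A Q 0
    rw [hR0] at this; simpa using this
  have hneg : γ - Q - μ * τ * A < 0 := by linarith
  refine ⟨h0, hneg, ?_⟩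
  -- pick L large
  set L : ℝ := |A| + |Q - A| + μ * |A| * τ + 1 with hL
  have hLpos : 0 < L := by positivity
  -- bound the integral for l ≥ 0
  have hgL : 0 < charFunR γ μ τ A Q L := by
    have hIub : (∫ s in (-τ)..(0 : ℝ), Real.exp (L * s)) ≤ τ := by
      have : (∫ s in (-τ)..(0 : ℝ), Real.exp (L * s)) ≤
          ∫ _ in (-τ)..(0 : ℝ), (1 : ℝ) := by
        apply intervalIntegral.integral_mono_on (by linarith)
        · apply Continuous.intervalIntegrable; fun_prop
        · exact intervalIntegrable_const
        · intro s hs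
          have : L * s ≤ 0 := mul_nonpos_of_nonneg_of_nonpos hLpos.le hs.2
          simpa using Real.exp_le_one_iff.mpr this
      simpa using this
    have hIlb : (0 : ℝ) ≤ ∫ s in (-τ)..(0 : ℝ), Real.exp (L * s) := by
      apply intervalIntegral.integral_nonneg (by linarith)
      intro s _; positivity
    have hIabs : |∫ s in (-τ)..(0 : ℝ), Real.exp (L * s)| ≤ τ := by
      rw [abs_of_nonneg hIlb]; exact hIub
    have hexp : Real.exp (-L * τ) ≤ 1 := by
      apply Real.exp_le_one_iff.mpr; nlinarith
    unfold charFunR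
    have h1 : (Q - A) * Real.exp (-L * τ) ≤ |Q - A| := by
      calc (Q - A) * Real.exp (-L * τ) ≤ |(Q - A) * Real.exp (-L * τ)| := le_abs_self _
        _ = |Q - A| * Real.exp (-L * τ) := by
            rw [abs_mul, abs_of_pos (Real.exp_pos _)]
        _ ≤ |Q - A| * 1 := by
            apply mul_le_mul_of_nonneg_left hexp (abs_nonneg _)
        _ = |Q - A| := mul_one _
    have h2 : μ * A * (∫ s in (-τ)..(0 : ℝ), Real.exp (L * s)) ≤ μ * |A| * τ := by
      calc μ * A * (∫ s in (-τ)..(0 : ℝ), Real.exp (L * s))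
          ≤ |μ * A * (∫ s in (-τ)..(0 : ℝ), Real.exp (L * s))| := le_abs_self _
        _ = μ * |A| * |∫ s in (-τ)..(0 : ℝ), Real.exp (L * s)| := by
            rw [abs_mul, abs_mul, abs_of_pos hμ]
        _ ≤ μ * |A| * τ := by
            apply mul_le_mul_of_nonneg_left hIabs (by positivity)
    have hA : A ≤ |A| := le_abs_self _
    linarith
  have hg0 : charFunR γ μ τ A Q 0 < 0 := by rw [hR0]; exact hneg
  obtain ⟨c, hc, hgc⟩ := intermediate_value_Ioo (le_of_lt hLpos)
    ((charFunR_continuous γ μ τ A Q).continuousOn)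
    (show (0 : ℝ) ∈ Set.Ioo (charFunR γ μ τ A Q 0) (charFunR γ μ τ A Q L) from ⟨hg0, hgL⟩)
  exact ⟨c, hc.1, by rw [charFun_ofReal, hgc]; simp⟩
end

section
/- Let γ, μ, τ > 0 and A, Q ∈ ℝ with Q = 0 and A < 0, and suppose that γ > μ or μτ·|A| < γ. Then every λ ∈ ℂ satisfying the characteristic equation Δ(λ) = 0 has Re λ < 0. -/
/-!
Write `I(λ) = ∫_{-τ}^0 e^{λs} ds` and suppose `Re λ ≥ 0`. If `μτ|A| < γ`, the real part of `Δ(λ)`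
is positive because `Re e^{-λτ} ≤ 1` and `|I(λ)| ≤ τ`. If `μ < γ`, the identity
`λ I(λ) = 1 - e^{-λτ}` turns `Δ(λ) = 0` (with `Q = 0`) into `λ + γ = A (λ + μ) I(λ)`; multiplying
by `conj (λ + μ)` and taking imaginary parts gives `Im λ (μ - γ) = A |λ + μ|² Im I(λ)`. The
elementary inequality `e^{-t} (t sin θ + θ cos θ) ≤ θ` (for `t, θ ≥ 0`) says
`Im λ · Im I(λ) ≤ 0`, which forces `Im λ = 0`; but for real `λ ≥ 0` the real part
`λ + γ > 0` cannot equal `A (λ + μ) I(λ) ≤ 0`.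
-/

open Complex

theorem Real.exp_neg_mul_mul_sin_add_mul_cos_le {t θ : ℝ} (ht : 0 ≤ t) (hθ : 0 ≤ θ) :
    Real.exp (-t) * (t * Real.sin θ + θ * Real.cos θ) ≤ θ := by
  have hsin : Real.sin θ ≤ θ := Real.sin_le hθ
  have hcos : Real.cos θ ≤ 1 := Real.cos_le_one θ
  have hexp : Real.exp (-t) * (1 + t) ≤ 1 := by
    have := Real.add_one_le_exp t
    rw [Real.exp_neg]
    exact inv_mul_le_one_of_le₀ (by linarith) (Real.exp_pos t).le
  calc Real.exp (-t) * (t * Real.sin θ + θ * Real.cos θ)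
      ≤ Real.exp (-t) * (t * θ + θ * 1) := by gcongr
    _ = Real.exp (-t) * (1 + t) * θ := by ring
    _ ≤ θ := mul_le_of_le_one_left hθ hexp

theorem Real.mul_exp_neg_mul_mul_sin_add_mul_cos_le_sq {t : ℝ} (ht : 0 ≤ t) (θ : ℝ) :
    θ * (Real.exp (-t) * (t * Real.sin θ + θ * Real.cos θ)) ≤ θ ^ 2 := by
  rcases le_total 0 θ with hθ | hθ
  · nlinarith [Real.exp_neg_mul_mul_sin_add_mul_cos_le ht hθ]
  · have := Real.exp_neg_mul_mul_sin_add_mul_cos_le ht (neg_nonneg.mpr hθ)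
    rw [Real.sin_neg, Real.cos_neg] at this
    nlinarith

theorem mul_integral_exp_mul (lam : ℂ) (τ : ℝ) :
    lam * ∫ s in (-τ)..(0 : ℝ), exp (lam * (s : ℂ)) = 1 - exp (-lam * (τ : ℂ)) := by
  rcases eq_or_ne lam 0 with rfl | hlam
  · simp
  · rw [integral_exp_mul_complex hlam, mul_div_cancel₀ _ hlam]
    simp

theorem charFun_Q_zero (γ μ τ A : ℝ) (lam : ℂ) :
    charFun γ μ τ A 0 lam =
      lam + γ - A * (lam + μ) * ∫ s in (-τ)..(0 : ℝ), exp (lam * (s : ℂ)) := by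
  rw [charFun, Complex.ofReal_zero]
  linear_combination (A : ℂ) * mul_integral_exp_mul lam τ

theorem im_mul_im_integral_exp_nonpos {lam : ℂ} {τ : ℝ} (hlam : 0 ≤ lam.re) (hτ : 0 < τ) :
    lam.im * (∫ s in (-τ)..(0 : ℝ), exp (lam * (s : ℂ))).im ≤ 0 := by
  rcases eq_or_ne lam 0 with rfl | hlam0
  · simp
  -- `I = (1 - e^{-λτ}) / λ`, whose imaginary part has numerator `r (x sin yτ + y cos yτ) - y`
  rw [eq_div_of_mul_eq hlam0 ((mul_comm _ _).trans (mul_integral_exp_mul lam τ)), div_im]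
  set x := lam.re
  set y := lam.im
  set r := Real.exp (-(x * τ))
  have hEre : (exp (-lam * τ)).re = r * Real.cos (y * τ) := by simp [exp_re, r, x, y]
  have hEim : (exp (-lam * τ)).im = -(r * Real.sin (y * τ)) := by simp [exp_im, r, x, y]
  have key : y * (r * (x * Real.sin (y * τ) + y * Real.cos (y * τ))) ≤ y ^ 2 := by
    refine le_of_mul_le_mul_left ?_ (pow_pos hτ 2)
    calc τ ^ 2 * (y * (r * (x * Real.sin (y * τ) + y * Real.cos (y * τ))))
        = y * τ * (Real.exp (-(x * τ)) *
            (x * τ * Real.sin (y * τ) + y * τ * Real.cos (y * τ))) := by ring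
      _ ≤ (y * τ) ^ 2 :=
        Real.mul_exp_neg_mul_mul_sin_add_mul_cos_le_sq (mul_nonneg hlam hτ.le) (y * τ)
      _ = τ ^ 2 * y ^ 2 := by ring
  simp only [sub_im, one_im, sub_re, one_re, hEre, hEim]
  rw [← sub_div, ← mul_div_assoc]
  refine div_nonpos_of_nonpos_of_nonneg ?_ (normSq_nonneg lam)
  linarith

theorem re_integral_exp_nonneg_of_im_eq_zero {lam : ℂ} {τ : ℝ} (hlam : lam.im = 0) (hτ : 0 ≤ τ) :
    0 ≤ (∫ s in (-τ)..(0 : ℝ), exp (lam * (s : ℂ))).re := by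
  have hreal : ∀ s : ℝ, exp (lam * (s : ℂ)) = ((Real.exp (lam.re * s) : ℝ) : ℂ) := by
    intro s
    rw [← re_add_im lam, hlam]
    push_cast
    simp
  simp_rw [hreal, intervalIntegral.integral_ofReal, ofReal_re]
  exact intervalIntegral.integral_nonneg (by linarith) fun s _ => (Real.exp_pos _).le

theorem norm_integral_exp_le {lam : ℂ} {τ : ℝ} (hlam : 0 ≤ lam.re) (hτ : 0 ≤ τ) :
    ‖∫ s in (-τ)..(0 : ℝ), exp (lam * (s : ℂ))‖ ≤ τ := by
  have hbound : ∀ s ∈ Set.uIoc (-τ) 0, ‖exp (lam * (s : ℂ))‖ ≤ 1 := by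
    intro s hs
    rw [Set.uIoc_of_le (by linarith)] at hs
    rw [norm_exp, Real.exp_le_one_iff]
    simpa using mul_nonpos_of_nonneg_of_nonpos hlam hs.2
  simpa [abs_of_nonneg hτ] using intervalIntegral.norm_integral_le_of_norm_le_const hbound

theorem re_exp_neg_mul_le_one {lam : ℂ} {τ : ℝ} (hlam : 0 ≤ lam.re) (hτ : 0 ≤ τ) :
    (exp (-lam * (τ : ℂ))).re ≤ 1 := by
  refine (re_le_norm _).trans ?_
  rw [norm_exp, Real.exp_le_one_iff]
  simpa using mul_nonneg hlam hτ

theorem charFun_ne_zero_of_lt {γ μ τ A : ℝ} (hμ : 0 ≤ μ) (hτ : 0 < τ) (hA : A ≤ 0)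
    (hμγ : μ < γ) {lam : ℂ} (hlam : 0 ≤ lam.re) : charFun γ μ τ A 0 lam ≠ 0 := by
  rw [charFun_Q_zero, sub_ne_zero]
  intro hroot
  have hre := congrArg re hroot
  have him := congrArg im hroot
  simp only [add_re, add_im, mul_re, mul_im, ofReal_re, ofReal_im, zero_mul, sub_zero,
    add_zero] at hre him
  have hyI := im_mul_im_integral_exp_nonpos hlam hτ
  set I := ∫ s in (-τ)..(0 : ℝ), exp (lam * (s : ℂ))
  set x := lam.re
  set y := lam.im
  have hy : y = 0 := by
    -- the imaginary part of `(λ + γ) (conj λ + μ) = A |λ + μ|² I`, times `y`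
    have hsq : y ^ 2 * (μ - γ) = A * ((x + μ) ^ 2 + y ^ 2) * (y * I.im) := by
      linear_combination y * ((x + μ) * him - y * hre)
    have hN : 0 ≤ (x + μ) ^ 2 + y ^ 2 := by positivity
    have hsq_nonneg : 0 ≤ y ^ 2 * (μ - γ) :=
      hsq ▸ mul_nonneg_of_nonpos_of_nonpos (mul_nonpos_of_nonpos_of_nonneg hA hN) hyI
    exact pow_eq_zero_iff two_ne_zero |>.mp <|
      (nonpos_of_mul_nonneg_left hsq_nonneg (sub_neg.mpr hμγ)).antisymm (sq_nonneg y)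
  have hI : 0 ≤ I.re := re_integral_exp_nonneg_of_im_eq_zero hy hτ.le
  rw [hy] at hre
  nlinarith [mul_nonneg (mul_nonneg (neg_nonneg.mpr hA) (add_nonneg hlam hμ)) hI]

theorem charFun_ne_zero_of_mul_abs_lt {γ μ τ A : ℝ} (hμ : 0 ≤ μ) (hτ : 0 ≤ τ) (hA : A ≤ 0)
    (hsmall : μ * τ * |A| < γ) {lam : ℂ} (hlam : 0 ≤ lam.re) : charFun γ μ τ A 0 lam ≠ 0 := by
  intro hroot
  have hre := congrArg re hroot
  rw [charFun, ofReal_zero, zero_sub, ← ofReal_mul] at hre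
  simp only [sub_re, add_re, neg_mul, re_ofReal_mul, neg_re, ofReal_re, zero_re] at hre
  have hE := re_exp_neg_mul_le_one hlam hτ
  rw [neg_mul] at hE
  have hI : -τ ≤ (∫ s in (-τ)..(0 : ℝ), exp (lam * (s : ℂ))).re :=
    neg_le_of_abs_le ((abs_re_le_norm _).trans (norm_integral_exp_le hlam hτ))
  rw [abs_of_nonpos hA] at hsmall
  nlinarith [mul_le_mul_of_nonpos_left hE hA,
    mul_le_mul_of_nonneg_left hI (mul_nonneg hμ (neg_nonneg.mpr hA))]

theorem charFun_roots_neg_re_of_A_neg_general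
    (γ μ τ A Q : ℝ) (hμ : 0 < μ) (hτ : 0 < τ)
    (hQ : Q = 0) (hA : A < 0) (hcond : μ < γ ∨ μ * τ * |A| < γ) :
    ∀ lam : ℂ, charFun γ μ τ A Q lam = 0 → lam.re < 0 := by
  subst hQ
  intro lam hroot
  by_contra! hlam
  rcases hcond with hμγ | hsmall
  · exact charFun_ne_zero_of_lt hμ.le hτ hA.le hμγ hlam hroot
  · exact charFun_ne_zero_of_mul_abs_lt hμ.le hτ.le hA.le hsmall hlam hroot

/-- If `Q = 0`, `A < 0`, and either `γ > μ` or `μτ|A| < γ`, then every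
root of the characteristic equation `Δ(λ) = 0` has negative real part. -/
theorem charFun_roots_neg_re_of_A_neg
    (γ μ τ A Q : ℝ) (hγ : 0 < γ) (hμ : 0 < μ) (hτ : 0 < τ)
    (hQ : Q = 0) (hA : A < 0) (hcond : μ < γ ∨ μ * τ * |A| < γ) :
    ∀ lam : ℂ, charFun γ μ τ A Q lam = 0 → lam.re < 0 :=
  charFun_roots_neg_re_of_A_neg_general γ μ τ A Q hμ hτ hQ hA hcond
end

section
/- Let γ, μ, τ > 0 and A, Q ∈ ℝ with Q = 0 and A ≠ 0, and suppose ω > 0 satisfies Δ(iω) = 0. Then γ ≠ μ, 2A(γ − μ) = ω² + γ², and in particular A(γ − μ) > 0, so that γ < μ if A < 0 and γ > μ if A > 0. -/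
open Complex

lemma normSq_one_sub_of_normSq_eq_one {e : ℂ} (he : normSq e = 1) :
    normSq (1 - e) = 2 * (1 - e).re := by
  rw [normSq_apply] at he ⊢
  simp only [sub_re, sub_im, one_re, one_im]
  linear_combination he

lemma normSq_ofReal_mul_one_sub_exp (A θ : ℝ) :
    normSq (A * (1 - exp (θ * I))) = 2 * A * (A * (1 - exp (θ * I))).re := by
  have he : normSq (exp (θ * I)) = 1 := by
    rw [normSq_eq_norm_sq, norm_exp_ofReal_mul_I, one_pow]
  rw [normSq_mul, normSq_ofReal, normSq_one_sub_of_normSq_eq_one he, re_ofReal_mul]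
  ring

lemma linear_eq_of_charFun_I_mul_eq_zero {γ μ τ A ω : ℝ} (hω : ω ≠ 0)
    (hroot : charFun γ μ τ A 0 (I * ω) = 0) :
    (μ + I * ω) * (A * (1 - exp ((-(ω * τ) : ℝ) * I))) = I * ω * (γ + I * ω) := by
  have hωC : (ω : ℂ) ≠ 0 := ofReal_ne_zero.mpr hω
  have hIω : I * (ω : ℂ) ≠ 0 := mul_ne_zero I_ne_zero hωC
  have hΔ : charFun γ μ τ A 0 (I * ω) =
      (I * ω * (γ + I * ω) - (μ + I * ω) * (A * (1 - exp ((-(ω * τ) : ℝ) * I)))) / (I * ω) := by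
    have he : exp (-(I * ω) * τ) = exp ((-(ω * τ) : ℝ) * I) := by push_cast; ring_nf
    unfold charFun
    rw [integral_exp_mul_complex hIω, he]
    simp only [ofReal_zero, mul_zero, exp_zero]
    push_cast
    field_simp
    ring
  rw [hΔ, div_eq_zero_iff, sub_eq_zero] at hroot
  exact (hroot.resolve_right hIω).symm

lemma hopf_identity_of_circle {γ μ ω A : ℝ} {z : ℂ} (hω : ω ≠ 0)
    (hcircle : normSq z = 2 * A * z.re)
    (hlin : (μ + I * ω) * z = I * ω * (γ + I * ω)) :
    2 * A * (γ - μ) = ω ^ 2 + γ ^ 2 := by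
  rw [normSq_apply] at hcircle
  have hre : μ * z.re - ω * z.im = -ω ^ 2 := by
    simpa [sq] using congrArg re hlin
  have him : ω * z.re + μ * z.im = ω * γ := by
    simpa [add_comm] using congrArg im hlin
  have hX : z.re * (ω ^ 2 + μ ^ 2) = ω ^ 2 * (γ - μ) := by
    linear_combination μ * hre + ω * him
  have hY : z.im * (ω ^ 2 + μ ^ 2) = ω * (ω ^ 2 + γ * μ) := by
    linear_combination μ * him - ω * hre
  have hpos : 0 < ω ^ 2 * (ω ^ 2 + μ ^ 2) := by positivity
  have h : (2 * A * (γ - μ) - (ω ^ 2 + γ ^ 2)) * (ω ^ 2 * (ω ^ 2 + μ ^ 2)) = 0 := by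
    linear_combination (z.re * (ω ^ 2 + μ ^ 2) + ω ^ 2 * (γ - μ) - 2 * A * (ω ^ 2 + μ ^ 2)) * hX
      + (z.im * (ω ^ 2 + μ ^ 2) + ω * (ω ^ 2 + γ * μ)) * hY - (ω ^ 2 + μ ^ 2) ^ 2 * hcircle
  exact sub_eq_zero.mp ((mul_eq_zero.mp h).resolve_right hpos.ne')

theorem charFun_hopf_identity_general
    (γ μ τ A Q : ℝ)
    (hQ : Q = 0) (ω : ℝ) (hω : 0 < ω)
    (hroot : charFun γ μ τ A Q (Complex.I * (ω : ℂ)) = 0) :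
    γ ≠ μ ∧ 2 * A * (γ - μ) = ω ^ 2 + γ ^ 2 ∧ 0 < A * (γ - μ) ∧
    (A < 0 → γ < μ) ∧ (0 < A → μ < γ) := by
  subst hQ
  have key : 2 * A * (γ - μ) = ω ^ 2 + γ ^ 2 :=
    hopf_identity_of_circle hω.ne' (normSq_ofReal_mul_one_sub_exp A (-(ω * τ)))
      (linear_eq_of_charFun_I_mul_eq_zero hω.ne' hroot)
  have hpos : 0 < A * (γ - μ) := by linarith [pow_pos hω 2, sq_nonneg γ]
  have hsign := pos_and_pos_or_neg_and_neg_of_mul_pos hpos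
  refine ⟨fun h => by simp [h] at hpos, key, hpos, fun hA => ?_, fun hA => ?_⟩
  · rcases hsign with ⟨hA', -⟩ | ⟨-, h⟩ <;> linarith
  · rcases hsign with ⟨-, h⟩ | ⟨hA', -⟩ <;> linarith

/-- If `Q = 0`, `A ≠ 0` and `ω > 0` satisfies `Δ(iω) = 0`, then
`γ ≠ μ`, `2A(γ - μ) = ω² + γ²`, hence `A(γ - μ) > 0`; so `γ < μ` if `A < 0` and
`γ > μ` if `A > 0`. -/
theorem charFun_hopf_identity
    (γ μ τ A Q : ℝ) (hγ : 0 < γ) (hμ : 0 < μ) (hτ : 0 < τ)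
    (hQ : Q = 0) (hA : A ≠ 0) (ω : ℝ) (hω : 0 < ω)
    (hroot : charFun γ μ τ A Q (Complex.I * (ω : ℂ)) = 0) :
    γ ≠ μ ∧ 2 * A * (γ - μ) = ω ^ 2 + γ ^ 2 ∧ 0 < A * (γ - μ) ∧
    (A < 0 → γ < μ) ∧ (0 < A → μ < γ) :=
  charFun_hopf_identity_general γ μ τ A Q hQ ω hω hroot
end
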